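/- arXiv:2101.02495 — 5 statements merged into one kernel-verified Lean document; each statement's English description precedes it below -/
import Mathlib

section
/- Let a, b, q be integers with q ≥ 1 and gcd(a, q) = 1, and suppose: b is an arbitrary integer when q is odd; b is even when q ≡ 0 (mod 4); b is odd when q ≡ 2 (mod 4). Then |∑_{r=0}^{q−1} e^{2πi(a r² + b r)/q}| = √q if q is odd, and |∑_{r=0}^{q−1} e^{2πi(a r² + b r)/q}| = √(2q) if q is even. -/
/-!
Weyl differencing: for `S = ∑_x e(f(x))` with `f(x) = a x² + b x` and `e(t) = exp(2πi t/q)`,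
one has `f(y + h) - f(y) = f(h) + 2ahy`, so `|S|² = ∑_{y,h} e(f(y+h) - f(y))` and the sum
over `y` of the linear character `e(2ahy)` kills every `h` with `2ah ≢ 0 (mod q)`. Since `a` is
a unit, this leaves `|S|² = q ∑_{2h ≡ 0} e(f(h))`.
For odd `q` only `h = 0` survives; for `q = 2m` also `h = m` does, and there
`f(m) = m (am + b) ≡ 0 (mod 2m)` exactly because the parity condition on `b` makes `am + b` even.
-/

open Finset

namespace AddChar

variable {R : Type*} [CommRing R] [Fintype R] [DecidableEq R]

theorem normSq_sum_quadratic {ψ : AddChar R ℂ} (hψ : ψ.IsPrimitive) (A B : R) :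
    (Complex.normSq (∑ x, ψ (A * x ^ 2 + B * x)) : ℂ) =
      Fintype.card R * ∑ h ∈ univ.filter (fun h => 2 * A * h = 0), ψ (A * h ^ 2 + B * h) := by
  set f : R → R := fun x => A * x ^ 2 + B * x
  have hshift (y h : R) : f (y + h) - f y = f h + y * (2 * A * h) := by simp only [f]; ring
  calc (Complex.normSq (∑ x, ψ (f x)) : ℂ)
      = ∑ y, ∑ x, ψ (f x - f y) := by
        rw [← Complex.mul_conj, map_sum, sum_mul_sum, sum_comm]
        simp only [← map_neg_eq_conj, ← map_add_eq_mul, sub_eq_add_neg]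
    _ = ∑ y, ∑ h, ψ (f h) * ψ (y * (2 * A * h)) := by
        refine sum_congr rfl fun y _ => ?_
        rw [← Equiv.sum_comp (Equiv.addLeft y)]
        simp only [Equiv.coe_addLeft, hshift, map_add_eq_mul]
    _ = _ := by
        rw [sum_comm, mul_sum, sum_filter]
        refine sum_congr rfl fun h _ => ?_
        rw [← mul_sum, sum_mulShift _ hψ]
        split_ifs <;> simp [f, mul_comm]

end AddChar

theorem Int.even_mul_half_add {a b q m : ℤ} (hqm : q = 2 * m) (hcop : Int.gcd a q = 1)
    (hb0 : q % 4 = 0 → Even b) (hb2 : q % 4 = 2 → Odd b) : Even (a * m + b) := by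
  rcases Int.even_or_odd m with hm | hm
  · exact (hm.mul_left a).add (hb0 (by obtain ⟨k, hk⟩ := hm; omega))
  · have ha : Odd a := by
      refine Int.not_even_iff_odd.mp fun ha => ?_
      have := Int.dvd_gcd ha.two_dvd (hqm ▸ dvd_mul_right 2 m)
      rw [hcop] at this
      norm_num at this
    exact (ha.mul hm).add_odd (hb2 (by obtain ⟨k, hk⟩ := hm; omega))

namespace ZMod

theorem sum_range_natCast {M : Type*} [AddCommMonoid M] (n : ℕ) [NeZero n]
    (f : ZMod n → M) : ∑ r ∈ range n, f r = ∑ x, f x :=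
  sum_nbij' (↑) val (fun _ _ => mem_univ _) (fun x _ => mem_range.mpr x.val_lt)
    (fun _ hr => val_natCast_of_lt (mem_range.mp hr)) (fun x _ => natCast_zmod_val x)
    (fun _ _ => rfl)

theorem stdAddChar_quadratic_natCast (n : ℕ) [NeZero n] (a b : ℤ) (r : ℕ) :
    stdAddChar ((a : ZMod n) * (r : ZMod n) ^ 2 + (b : ZMod n) * (r : ZMod n)) =
      Complex.exp (2 * Real.pi * Complex.I *
        (((a : ℂ) * (r : ℂ) ^ 2 + (b : ℂ) * (r : ℂ)) / n)) := by
  have hcast : (a : ZMod n) * (r : ZMod n) ^ 2 + (b : ZMod n) * (r : ZMod n) =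
      ((a * r ^ 2 + b * r : ℤ) : ZMod n) := by push_cast; ring
  rw [hcast, stdAddChar_coe]
  push_cast
  ring_nf

theorem two_mul_eq_zero_iff_of_odd {n : ℕ} (hn : Odd n) {h : ZMod n} : 2 * h = 0 ↔ h = 0 := by
  have h2 : IsUnit (2 : ZMod n) := by
    exact_mod_cast (isUnit_iff_coprime 2 n).mpr (Nat.coprime_two_left.mpr hn)
  exact h2.mul_right_eq_zero

theorem two_mul_eq_zero_iff (m : ℕ) [NeZero m] {h : ZMod (2 * m)} :
    2 * h = 0 ↔ h = 0 ∨ h = m := by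
  have hm : m < 2 * m := by have := NeZero.pos m; omega
  calc 2 * h = 0 ↔ 2 * m ∣ 2 * h.val := by
        rw [← natCast_eq_zero_iff, Nat.cast_mul, natCast_zmod_val, Nat.cast_ofNat]
    _ ↔ m ∣ h.val := Nat.mul_dvd_mul_iff_left two_pos
    _ ↔ h.val = 0 ∨ h.val = m := by
        refine ⟨fun ⟨c, hc⟩ => ?_, by rintro (hv | hv) <;> simp [hv]⟩
        have : c < 2 := by nlinarith [h.val_lt]
        interval_cases c <;> simp_all
    _ ↔ h = 0 ∨ h = m :=
        or_congr (val_eq_zero h) (by rw [← (val_injective _).eq_iff, val_natCast_of_lt hm])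

theorem normSq_sum_stdAddChar_quadratic (n : ℕ) [NeZero n] {A : ZMod n} (hA : IsUnit A)
    (B : ZMod n) :
    (Complex.normSq (∑ x, stdAddChar (A * x ^ 2 + B * x)) : ℂ) =
      n * ∑ h ∈ univ.filter (fun h : ZMod n => 2 * h = 0), stdAddChar (A * h ^ 2 + B * h) := by
  rw [AddChar.normSq_sum_quadratic (isPrimitive_stdAddChar n), card]
  simp only [mul_right_comm _ A, hA.mul_left_eq_zero]

theorem normSq_sum_stdAddChar_quadratic_of_odd {n : ℕ} [NeZero n] (hn : Odd n) {A : ZMod n}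
    (hA : IsUnit A) (B : ZMod n) :
    Complex.normSq (∑ x, stdAddChar (A * x ^ 2 + B * x)) = n := by
  have hfilter : univ.filter (fun h : ZMod n => 2 * h = 0) = {0} := by
    ext h; simp [two_mul_eq_zero_iff_of_odd hn]
  have h := normSq_sum_stdAddChar_quadratic n hA B
  simp only [hfilter, sum_singleton, zero_pow two_ne_zero, mul_zero, add_zero,
    AddChar.map_zero_eq_one, mul_one] at h
  exact_mod_cast h

theorem normSq_sum_stdAddChar_quadratic_of_even (m : ℕ) [NeZero m] {A : ZMod (2 * m)}
    (hA : IsUnit A) (B : ZMod (2 * m)) (hm : A * m ^ 2 + B * m = 0) :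
    Complex.normSq (∑ x, stdAddChar (A * x ^ 2 + B * x)) = 2 * (2 * m) := by
  have hfilter : univ.filter (fun h : ZMod (2 * m) => 2 * h = 0) = {0, (m : ZMod (2 * m))} := by
    ext h; simp [two_mul_eq_zero_iff]
  have h0m : (0 : ZMod (2 * m)) ≠ m := by
    rw [ne_comm, Ne, natCast_eq_zero_iff]
    exact Nat.not_dvd_of_pos_of_lt (NeZero.pos m) (by have := NeZero.pos m; omega)
  have h := normSq_sum_stdAddChar_quadratic _ hA B
  simp only [hfilter, sum_pair h0m, hm, zero_pow two_ne_zero, mul_zero, add_zero,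
    AddChar.map_zero_eq_one] at h
  exact_mod_cast h.trans (by push_cast; ring : _ = ((2 * (2 * m) : ℕ) : ℂ))

theorem intCast_mul_sq_add_intCast_mul_eq_zero (m : ℕ) {a b : ℤ} (h : Even (a * m + b)) :
    (a : ZMod (2 * m)) * m ^ 2 + b * m = 0 := by
  obtain ⟨k, hk⟩ := h
  have hk' := congrArg (Int.cast : ℤ → ZMod (2 * m)) hk
  push_cast at hk'
  calc (a : ZMod (2 * m)) * m ^ 2 + b * m = ((2 * m : ℕ) : ZMod (2 * m)) * k := by
        push_cast; linear_combination (m : ZMod (2 * m)) * hk'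
    _ = 0 := by rw [natCast_self, zero_mul]

end ZMod

/-- **Gauss quadratic sums.** If `a, b, q` are integers with `q ≥ 1`, `gcd(a,q) = 1`, and
`b` is even when `q ≡ 0 (mod 4)`, odd when `q ≡ 2 (mod 4)` (arbitrary when `q` is odd),
then the modulus of the complete Gauss sum `∑_{r=0}^{q-1} e^{2πi(ar² + br)/q}` equals
`√q` when `q` is odd and `√(2q)` when `q` is even. -/
theorem gauss_quadratic_sum_modulus (a b q : ℤ) (hq : 1 ≤ q) (hcop : Int.gcd a q = 1)
    (hb0 : q % 4 = 0 → Even b) (hb2 : q % 4 = 2 → Odd b) :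
    ‖∑ r ∈ Finset.range q.toNat,
        Complex.exp (2 * (Real.pi : ℂ) * Complex.I *
          (((a : ℂ) * (r : ℂ) ^ 2 + (b : ℂ) * (r : ℂ)) / (q : ℂ)))‖ =
      if Odd q then Real.sqrt q else Real.sqrt (2 * q) := by
  obtain ⟨n, rfl⟩ := Int.eq_ofNat_of_zero_le (by omega : 0 ≤ q)
  have : NeZero n := ⟨by omega⟩
  have hA : IsUnit (a : ZMod n) :=
    (ZMod.unitOfIsCoprime a (Int.isCoprime_iff_gcd_eq_one.mpr hcop)).isUnit
  have hsum : ∑ r ∈ range n, Complex.exp (2 * (Real.pi : ℂ) * Complex.I *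
        (((a : ℂ) * (r : ℂ) ^ 2 + (b : ℂ) * (r : ℂ)) / (n : ℂ))) =
      ∑ x : ZMod n, ZMod.stdAddChar ((a : ZMod n) * x ^ 2 + (b : ZMod n) * x) := by
    rw [← ZMod.sum_range_natCast]
    simp only [ZMod.stdAddChar_quadratic_natCast]
  rw [Int.toNat_natCast, Int.cast_natCast, hsum, Complex.norm_def]
  split_ifs with hodd
  · rw [ZMod.normSq_sum_stdAddChar_quadratic_of_odd (Int.odd_coe_nat n |>.mp hodd) hA,
      Int.cast_natCast]
  · obtain ⟨m, rfl⟩ : ∃ m, n = 2 * m :=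
      (Nat.not_odd_iff_even.mp (by exact_mod_cast hodd)).exists_two_nsmul _
    have : NeZero m := ⟨by rintro rfl; omega⟩
    have hpar := Int.even_mul_half_add (by push_cast; rfl) hcop hb0 hb2
    rw [ZMod.normSq_sum_stdAddChar_quadratic_of_even m hA _
      (by exact_mod_cast ZMod.intCast_mul_sq_add_intCast_mul_eq_zero m hpar)]
    push_cast
    ring_nf
end

section
/- There exists an absolute constant A > 0 such that the following holds. Let I ⊂ ℤ be a finite nonempty interval of integers, and let a, b, q be integers with q ≥ 2, gcd(a, q) = 1, and: b arbitrary when q is odd, b even when q ≡ 0 (mod 4), b odd when q ≡ 2 (mod 4). Then there exists a real number C with 1/2 ≤ C ≤ √2 such that | |∑_{k ∈ I} e^{2πi(a k² + b k)/q}| − C·|I|/√q | ≤ A √(q ln q), where |I| denotes the number of integers in I. -/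
/-!
Work modulo `q` with the additive character `ψ = ZMod.stdAddChar`, so that the summand is
`ψ (a k² + b k)`. Cutting the interval into `⌊|I|/q⌋` complete periods and a remainder of
`r < q` terms writes the sum as `⌊|I|/q⌋ • G + T`, where `G` is the complete Gauss sum.

Expanding `G · conj G` and substituting `x = y + d` leaves `q · ∑_{2d = 0} ψ (a d² + b d)`;
the parity condition on `b` is exactly what makes each surviving phase trivial, so
`‖G‖² = q · #{d | 2d = 0}`, and hence `C = √#{d | 2d = 0} ∈ {1, √2}`.

The remainder `T` is bounded by Weyl differencing: in `|T|²` the shift `h` contributes a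
geometric sum with ratio `ψ (2ah)`, of modulus at most `r` if `2ah = 0` and at most
`q / (2 ‖2ah‖)` otherwise, where `‖c‖ = |c.valMinAbs|` is the distance from `c` to `0` in
`ZMod q`. As `a` is a unit, `h ↦ 2ah` covers every residue at most four times when `|h| < q`,
and summing `q / ‖c‖` over the residues gives the harmonic bound `O(q log q)`.
-/

open Finset

lemma sum_Ico_add_sum_Ico {M : Type*} [AddCommMonoid M] (f : ℤ → M) {a b c : ℤ}
    (hab : a ≤ b) (hbc : b ≤ c) :
    ∑ k ∈ Ico a b, f k + ∑ k ∈ Ico b c, f k = ∑ k ∈ Ico a c, f k := by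
  rw [← sum_union (Ico_disjoint_Ico_consecutive a b c), Ico_union_Ico_eq_Ico hab hbc]

lemma sum_mul_conj_sum_Ico (g : ℤ → ℂ) (L : ℤ) (r : ℕ) :
    (∑ k ∈ Ico L (L + r), g k) * (starRingEnd ℂ) (∑ k ∈ Ico L (L + r), g k)
      = ∑ h ∈ Ioo (-r : ℤ) r, ∑ k ∈ Ico (max L (L - h)) (min (L + r) (L + r - h)),
          g (k + h) * (starRingEnd ℂ) (g k) := by
  have hshift : ∀ k, ∑ j ∈ Ico L (L + r), g j * (starRingEnd ℂ) (g k)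
      = ∑ h ∈ Ico (L - k) (L + r - k), g (k + h) * (starRingEnd ℂ) (g k) := fun k => by
    rw [sum_Ico_add (fun j => g j * (starRingEnd ℂ) (g k)), sub_add_cancel, sub_add_cancel]
  rw [map_sum, sum_mul_sum, sum_comm]
  simp_rw [hshift]
  exact sum_comm' fun k h => by simp only [mem_Ico, mem_Ioo, max_le_iff, lt_min_iff]; omega

lemma abs_norm_div_nsmul_add_sub_le {E : Type*} [NormedAddCommGroup E] [NormedSpace ℝ E]
    (G T : E) {N q : ℕ} (hq : 0 < q) :
    |‖(N / q) • G + T‖ - ‖G‖ * N / q| ≤ ‖T‖ + ‖G‖ := by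
  have hqR : (0 : ℝ) < q := Nat.cast_pos.mpr hq
  have hT : |‖(N / q) • G + T‖ - (N / q : ℕ) * ‖G‖| ≤ ‖T‖ := by
    simpa [RCLike.norm_nsmul (K := ℝ)] using
      abs_norm_sub_norm_le ((N / q) • G + T) ((N / q) • G)
  have hN : (N : ℝ) = q * (N / q : ℕ) + (N % q : ℕ) := by
    exact_mod_cast (Nat.div_add_mod N q).symm
  have hsplit : ‖G‖ * N / q = (N / q : ℕ) * ‖G‖ + ‖G‖ * ((N % q : ℕ) / q) := by
    rw [hN]
    field_simp
  have hfrac : ‖G‖ * ((N % q : ℕ) / q) ≤ ‖G‖ :=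
    mul_le_of_le_one_right (norm_nonneg G)
      ((div_le_one hqR).mpr (by exact_mod_cast (Nat.mod_lt N hq).le))
  have hfrac₀ : 0 ≤ ‖G‖ * ((N % q : ℕ) / q) := by positivity
  rw [hsplit, abs_le]
  rw [abs_le] at hT
  constructor <;> linarith [hT.1, hT.2]

lemma one_half_le_log_of_two_le {x : ℝ} (hx : 2 ≤ x) : 1 / 2 ≤ Real.log x := by
  have := Real.log_two_gt_d9
  have := Real.log_le_log two_pos hx
  linarith

lemma sqrt_two_mul_sqrt_le_two_mul_sqrt_mul_log {x : ℝ} (hx : 2 ≤ x) :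
    Real.sqrt 2 * Real.sqrt x ≤ 2 * Real.sqrt (x * Real.log x) := by
  have hlog := one_half_le_log_of_two_le hx
  calc Real.sqrt 2 * Real.sqrt x = Real.sqrt (2 * x) := (Real.sqrt_mul zero_le_two x).symm
    _ ≤ Real.sqrt (2 ^ 2 * (x * Real.log x)) := Real.sqrt_le_sqrt (by nlinarith)
    _ = 2 * Real.sqrt (x * Real.log x) := by
      rw [Real.sqrt_mul (sq_nonneg _), Real.sqrt_sq zero_le_two]

lemma abs_norm_div_nsmul_add_sub_le_mul_sqrt {E : Type*} [NormedAddCommGroup E]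
    [NormedSpace ℝ E] (G T : E) {C A : ℝ} {N q : ℕ} (hq : 2 ≤ q)
    (hG : ‖G‖ = C * Real.sqrt q) (hC : C ≤ Real.sqrt 2)
    (hT : ‖T‖ ≤ A * Real.sqrt (q * Real.log q)) :
    |‖(N / q) • G + T‖ - C * N / Real.sqrt q| ≤ (A + 2) * Real.sqrt (q * Real.log q) := by
  have hCN : C * N / Real.sqrt q = ‖G‖ * N / q := by
    rw [hG]
    field_simp
    rw [Real.sq_sqrt (Nat.cast_nonneg q)]
  have hGle : ‖G‖ ≤ 2 * Real.sqrt (q * Real.log q) := by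
    rw [hG]
    exact (mul_le_mul_of_nonneg_right hC (Real.sqrt_nonneg _)).trans
      (sqrt_two_mul_sqrt_le_two_mul_sqrt_mul_log (by exact_mod_cast hq))
  rw [hCN]
  linarith [abs_norm_div_nsmul_add_sub_le G T (N := N) (by omega : 0 < q)]

namespace ZMod

lemma injOn_intCast_Ico {n : ℕ} (c : ℤ) :
    Set.InjOn ((↑) : ℤ → ZMod n) (Ico c (c + n)) := by
  intro x hx y hy hxy
  simp only [coe_Ico, Set.mem_Ico] at hx hy
  have hdvd : (n : ℤ) ∣ y - x := (intCast_eq_intCast_iff_dvd_sub x y n).mp hxy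
  have := Int.eq_zero_of_abs_lt_dvd hdvd (by rw [abs_lt]; omega)
  omega

section

variable {n : ℕ} [NeZero n]

lemma sum_val_eq_sum_range {M : Type*} [AddCommMonoid M] (F : ℕ → M) :
    ∑ x : ZMod n, F x.val = ∑ j ∈ range n, F j := by
  obtain ⟨k, rfl⟩ : ∃ k, n = k + 1 := Nat.exists_eq_succ_of_ne_zero (NeZero.ne n)
  exact Fin.sum_univ_eq_sum_range F (k + 1)

lemma sum_Ico_intCast {M : Type*} [AddCommMonoid M] (f : ZMod n → M) (c : ℤ) :
    ∑ k ∈ Ico c (c + n), f k = ∑ x, f x := by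
  rw [← sum_image (injOn_intCast_Ico c)]
  congr 1
  apply eq_univ_of_card
  rw [card_image_of_injOn (injOn_intCast_Ico c), Int.card_Ico, ZMod.card]
  omega

lemma sum_Ico_intCast_mul_add {M : Type*} [AddCommMonoid M] (f : ZMod n → M) (L : ℤ)
    (m r : ℕ) :
    ∑ k ∈ Ico L (L + (n * m + r : ℕ)), f k
      = m • ∑ x, f x + ∑ k ∈ Ico L (L + r), f k := by
  induction m with
  | zero => simp
  | succ m ih =>
    have hnm : (0 : ℤ) ≤ n * m := by positivity
    rw [← sum_Ico_add_sum_Ico _ (b := L + (n * m + r : ℕ)) (by omega) (by push_cast; nlinarith),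
      ih, show L + (n * (m + 1) + r : ℕ) = L + (n * m + r : ℕ) + n by push_cast; ring,
      sum_Ico_intCast, succ_nsmul]
    abel

lemma conj_stdAddChar (x : ZMod n) : (starRingEnd ℂ) (stdAddChar x) = stdAddChar (-x) := by
  rw [AddChar.map_neg_eq_inv, Complex.inv_eq_conj (AddChar.norm_apply _ _)]

lemma le_norm_stdAddChar_sub_one (c : ZMod n) :
    4 * |(c.valMinAbs : ℝ)| / n ≤ ‖stdAddChar c - 1‖ := by
  have hn : (0 : ℝ) < n := Nat.cast_pos.mpr (NeZero.pos n)
  set m := c.valMinAbs with hm_def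
  have hm : |(m : ℝ)| * 2 ≤ n := by
    have := valMinAbs_mem_Ioc c
    rw [Set.mem_Ioc] at this
    have : |m| * 2 ≤ n := by rcases abs_cases m with ⟨h, _⟩ | ⟨h, _⟩ <;> rw [h] <;> omega
    exact_mod_cast this
  have hangle : |Real.pi * m / n| ≤ Real.pi / 2 := by
    rw [abs_div, abs_mul, abs_of_pos Real.pi_pos, abs_of_pos hn, div_le_iff₀ hn]
    nlinarith [Real.pi_pos]
  have hexp : stdAddChar c = Complex.exp (Complex.I * ((2 * (Real.pi * m / n) : ℝ) : ℂ)) := by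
    rw [← coe_valMinAbs c, stdAddChar_coe, ← hm_def]
    push_cast
    ring_nf
  rw [hexp, Complex.norm_exp_I_mul_ofReal_sub_one, mul_div_cancel_left₀ _ two_ne_zero, norm_mul,
    Real.norm_two, Real.norm_eq_abs]
  calc 4 * |(m : ℝ)| / n = 2 * (2 / Real.pi * |Real.pi * m / n|) := by
        rw [abs_div, abs_mul, abs_of_pos Real.pi_pos, abs_of_pos hn]
        field_simp
        ring
    _ ≤ 2 * |Real.sin (Real.pi * m / n)| := by gcongr; exact Real.mul_abs_le_abs_sin hangle

lemma norm_geom_sum_stdAddChar_le {c : ZMod n} (hc : c ≠ 0) (m : ℕ) :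
    ‖∑ j ∈ range m, stdAddChar c ^ j‖ ≤ n / (2 * |(c.valMinAbs : ℝ)|) := by
  have hψ : stdAddChar c ≠ 1 := by
    rwa [← (stdAddChar (N := n)).map_zero_eq_one, injective_stdAddChar.ne_iff]
  have hv : 0 < |(c.valMinAbs : ℝ)| := by
    rw [abs_pos, Int.cast_ne_zero, Ne, valMinAbs_eq_zero]
    exact hc
  have hnum : ‖stdAddChar c ^ m - 1‖ ≤ 2 :=
    (norm_sub_le _ _).trans (by rw [norm_pow, AddChar.norm_apply]; norm_num)
  have hn : (0 : ℝ) < n := Nat.cast_pos.mpr (NeZero.pos n)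
  rw [geom_sum_eq hψ, norm_div]
  calc _ ≤ 2 / (4 * |(c.valMinAbs : ℝ)| / n) :=
        div_le_div₀ zero_le_two hnum (by positivity) (le_norm_stdAddChar_sub_one c)
    _ = _ := by field_simp; ring

end

noncomputable def geomSumBound {n : ℕ} (r : ℕ) (c : ZMod n) : ℝ :=
  if c = 0 then r else n / (2 * |(c.valMinAbs : ℝ)|)

lemma geomSumBound_nonneg {n : ℕ} (r : ℕ) (c : ZMod n) : 0 ≤ geomSumBound r c := by
  unfold geomSumBound
  split_ifs <;> positivity

variable {n : ℕ} [NeZero n]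

lemma norm_sum_Ico_stdAddChar_linear_le (c d : ZMod n) {lo hi : ℤ} {r : ℕ}
    (hlen : hi - lo ≤ r) :
    ‖∑ k ∈ Ico lo hi, stdAddChar (c * k + d : ZMod n)‖ ≤ geomSumBound r c := by
  have hterm : ∀ j : ℕ, stdAddChar (c * ((lo + j : ℤ) : ZMod n) + d)
      = stdAddChar (c * lo + d : ZMod n) * stdAddChar c ^ j := by
    intro j
    rw [← AddChar.map_nsmul_eq_pow, ← AddChar.map_add_eq_mul, nsmul_eq_mul]
    push_cast
    ring_nf
  rw [Int.Ico_eq_finset_map, sum_map]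
  simp only [Function.Embedding.trans_apply, Nat.castEmbedding_apply, addLeftEmbedding_apply,
    hterm, ← mul_sum, norm_mul, AddChar.norm_apply, one_mul]
  unfold geomSumBound
  split_ifs with hc
  · rw [hc, AddChar.map_zero_eq_one]
    simp only [one_pow, sum_const, card_range, nsmul_eq_mul, mul_one, Complex.norm_natCast]
    exact_mod_cast (show ((hi - lo).toNat : ℤ) ≤ r by omega)
  · exact norm_geom_sum_stdAddChar_le hc _

lemma sq_norm_sum_Ico_stdAddChar_quadratic_le (a b : ZMod n) (L : ℤ) (r : ℕ) :
    ‖∑ k ∈ Ico L (L + r), stdAddChar (a * k ^ 2 + b * k : ZMod n)‖ ^ 2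
      ≤ ∑ h ∈ Ioo (-r : ℤ) r, geomSumBound r (2 * a * h : ZMod n) := by
  have hdiff : ∀ h k : ℤ, stdAddChar (a * ↑(k + h) ^ 2 + b * ↑(k + h) : ZMod n)
      * (starRingEnd ℂ) (stdAddChar (a * k ^ 2 + b * k : ZMod n))
      = stdAddChar (2 * a * h * k + (a * h ^ 2 + b * h) : ZMod n) := fun h k => by
    rw [conj_stdAddChar, ← AddChar.map_add_eq_mul]
    push_cast
    ring_nf
  set S := ∑ k ∈ Ico L (L + r), stdAddChar (a * k ^ 2 + b * k : ZMod n)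
  calc ‖S‖ ^ 2 = ‖S * (starRingEnd ℂ) S‖ := by rw [norm_mul, Complex.norm_conj, sq]
    _ ≤ _ := by
      rw [sum_mul_conj_sum_Ico]
      refine (norm_sum_le _ _).trans (sum_le_sum fun h _ => ?_)
      simp_rw [hdiff]
      exact norm_sum_Ico_stdAddChar_linear_le _ _ (by omega)

lemma sum_Ico_comp_two_mul_le {F : ZMod n → ℝ} (hF : ∀ x, 0 ≤ F x) {a : ZMod n}
    (ha : IsUnit a) {α β : ℤ} (hlen : 2 * (β - α) ≤ n + 1) :
    ∑ h ∈ Ico α β, F (2 * a * h) ≤ ∑ x, F x := by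
  have hinj : Set.InjOn (fun h : ℤ => (2 * a * h : ZMod n)) (Ico α β) := by
    intro x hx y hy hxy
    simp only [coe_Ico, Set.mem_Ico] at hx hy
    have h2 : ((2 * x : ℤ) : ZMod n) = ((2 * y : ℤ) : ZMod n) := by
      push_cast
      exact ha.mul_left_cancel (by linear_combination hxy)
    have := injOn_intCast_Ico (2 * α) (by simp only [coe_Ico, Set.mem_Ico]; omega)
      (by simp only [coe_Ico, Set.mem_Ico]; omega) h2
    omega
  rw [← sum_image hinj]
  exact sum_le_univ_sum_of_nonneg hF

lemma sum_Ioo_comp_two_mul_le {F : ZMod n → ℝ} (hF : ∀ x, 0 ≤ F x) {a : ZMod n}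
    (ha : IsUnit a) {r : ℕ} (hr : r ≤ n) :
    ∑ h ∈ Ioo (-r : ℤ) r, F (2 * a * h) ≤ 4 * ∑ x, F x := by
  set m : ℤ := n / 2
  have hpiece := fun α β hlen => sum_Ico_comp_two_mul_le hF ha (α := α) (β := β) hlen
  calc ∑ h ∈ Ioo (-r : ℤ) r, F (2 * a * h) ≤ ∑ h ∈ Ico (-n : ℤ) n, F (2 * a * h) :=
        sum_le_sum_of_subset_of_nonneg (fun h => by simp only [mem_Ioo, mem_Ico]; omega)
          fun _ _ _ => hF _
    _ = (∑ h ∈ Ico (-n : ℤ) (-n + m), F (2 * a * h) + ∑ h ∈ Ico (-n + m) 0, F (2 * a * h))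
        + (∑ h ∈ Ico 0 m, F (2 * a * h) + ∑ h ∈ Ico m n, F (2 * a * h)) := by
      rw [sum_Ico_add_sum_Ico _ (by omega) (by omega), sum_Ico_add_sum_Ico _ (by omega) (by omega),
        sum_Ico_add_sum_Ico _ (by omega) (by omega)]
    _ ≤ 4 * ∑ x, F x := by
      linarith [hpiece (-n) (-n + m) (by omega), hpiece (-n + m) 0 (by omega),
        hpiece 0 m (by omega), hpiece m n (by omega)]

lemma sum_inv_val_le : ∑ c : ZMod n, ((c.val : ℝ))⁻¹ ≤ 1 + Real.log n := by
  obtain ⟨k, hk⟩ : ∃ k, n = k + 1 := Nat.exists_eq_succ_of_ne_zero (NeZero.ne n)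
  rw [sum_val_eq_sum_range (fun j => ((j : ℝ))⁻¹), hk, sum_range_succ']
  simp only [Nat.cast_add, Nat.cast_one, CharP.cast_eq_zero, _root_.inv_zero, add_zero]
  have hh : ∑ i ∈ range k, ((i : ℝ) + 1)⁻¹ = harmonic k := by simp [harmonic]
  rw [hh]
  refine (harmonic_le_one_add_log k).trans ?_
  rcases Nat.eq_zero_or_pos k with rfl | hk0
  · simp
  · gcongr
    linarith

lemma abs_valMinAbs_eq_min (c : ZMod n) :
    |(c.valMinAbs : ℝ)| = min (c.val : ℝ) (n - c.val) := by
  have h : |c.valMinAbs| = min (c.val : ℤ) (n - c.val) := by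
    rw [Int.abs_eq_natAbs, valMinAbs_natAbs_eq_min]
    have := c.val_lt
    omega
  rw [← Int.cast_abs, h]
  push_cast
  rfl

lemma geomSumBound_le (r : ℕ) (c : ZMod n) :
    geomSumBound r c ≤ (if c = 0 then (r : ℝ) else 0)
      + n / 2 * (((c.val : ℝ))⁻¹ + (((-c).val : ℝ))⁻¹) := by
  unfold geomSumBound
  split_ifs with hc
  · simp [hc]
  · have hv : (1 : ℝ) ≤ c.val := by exact_mod_cast (val_pos).mpr hc
    have hw : (1 : ℝ) ≤ n - c.val := by
      have : ((c.val + 1 : ℕ) : ℝ) ≤ n := by exact_mod_cast c.val_lt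
      push_cast at this
      linarith
    rw [neg_val, if_neg hc, zero_add, Nat.cast_sub c.val_lt.le, abs_valMinAbs_eq_min]
    rcases min_choice (c.val : ℝ) (n - c.val) with h | h <;> rw [h]
    · calc (n : ℝ) / (2 * c.val) = n / 2 * (c.val : ℝ)⁻¹ := by ring
        _ ≤ _ := by gcongr; exact le_add_of_nonneg_right (by positivity)
    · calc (n : ℝ) / (2 * (n - c.val)) = n / 2 * ((n : ℝ) - c.val)⁻¹ := by field_simp
        _ ≤ _ := by gcongr; exact le_add_of_nonneg_left (by positivity)

lemma sum_geomSumBound_le {r : ℕ} (hr : r ≤ n) :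
    ∑ c : ZMod n, geomSumBound r c ≤ n * (2 + Real.log n) := by
  have hneg : ∑ c : ZMod n, (((-c).val : ℝ))⁻¹ = ∑ c : ZMod n, ((c.val : ℝ))⁻¹ :=
    Equiv.sum_comp (Equiv.neg (ZMod n)) (fun c : ZMod n => ((c.val : ℝ))⁻¹)
  have hr' : (r : ℝ) ≤ n := by exact_mod_cast hr
  calc ∑ c : ZMod n, geomSumBound r c
      ≤ ∑ c : ZMod n, ((if c = 0 then (r : ℝ) else 0)
          + n / 2 * (((c.val : ℝ))⁻¹ + (((-c).val : ℝ))⁻¹)) :=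
        sum_le_sum fun c _ => geomSumBound_le r c
    _ = r + n * ∑ c : ZMod n, ((c.val : ℝ))⁻¹ := by
      rw [sum_add_distrib, sum_ite_eq' univ (0 : ZMod n), if_pos (mem_univ _), ← mul_sum,
        sum_add_distrib, hneg]
      ring
    _ ≤ n * (2 + Real.log n) := by
      nlinarith [sum_inv_val_le (n := n), Nat.cast_nonneg (α := ℝ) n]

lemma norm_sum_Ico_stdAddChar_quadratic_le (hn : 2 ≤ n) {a : ZMod n} (ha : IsUnit a) (b : ZMod n)
    (L : ℤ) {r : ℕ} (hr : r ≤ n) :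
    ‖∑ k ∈ Ico L (L + r), stdAddChar (a * k ^ 2 + b * k : ZMod n)‖
      ≤ 5 * Real.sqrt (n * Real.log n) := by
  have hlog := one_half_le_log_of_two_le (by exact_mod_cast hn : (2 : ℝ) ≤ n)
  have hsq : ‖∑ k ∈ Ico L (L + r), stdAddChar (a * k ^ 2 + b * k : ZMod n)‖ ^ 2
      ≤ 5 ^ 2 * (n * Real.log n) := by
    calc _ ≤ ∑ h ∈ Ioo (-r : ℤ) r, geomSumBound r (2 * a * h : ZMod n) :=
          sq_norm_sum_Ico_stdAddChar_quadratic_le a b L r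
      _ ≤ 4 * ∑ c : ZMod n, geomSumBound r c :=
          sum_Ioo_comp_two_mul_le (geomSumBound_nonneg r) ha hr
      _ ≤ 4 * (n * (2 + Real.log n)) := by gcongr; exact sum_geomSumBound_le hr
      _ ≤ 5 ^ 2 * (n * Real.log n) := by nlinarith [Nat.cast_nonneg (α := ℝ) n]
  rw [← Real.sqrt_sq (by norm_num : (0 : ℝ) ≤ 5), ← Real.sqrt_mul (by norm_num)]
  exact Real.le_sqrt_of_sq_le hsq

lemma sq_norm_sum_stdAddChar_quadratic {a : ZMod n} (ha : IsUnit a) {b : ZMod n}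
    (hb : ∀ d : ZMod n, 2 * d = 0 → a * d ^ 2 + b * d = 0) :
    ‖∑ x, stdAddChar (a * x ^ 2 + b * x)‖ ^ 2 = n * #{d : ZMod n | 2 * d = 0} := by
  set G := ∑ x, stdAddChar (a * x ^ 2 + b * x)
  have hdiff : ∀ y d : ZMod n, stdAddChar (a * (y + d) ^ 2 + b * (y + d))
      * stdAddChar (-(a * y ^ 2 + b * y))
      = stdAddChar (a * d ^ 2 + b * d) * stdAddChar (y * (2 * a * d)) := by
    intro y d
    rw [← AddChar.map_add_eq_mul, ← AddChar.map_add_eq_mul]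
    ring_nf
  have horth : ∀ d : ZMod n, stdAddChar (a * d ^ 2 + b * d) * ∑ y, stdAddChar (y * (2 * a * d))
      = if 2 * d = 0 then (n : ℂ) else 0 := by
    intro d
    have h2ad : 2 * a * d = 0 ↔ 2 * d = 0 := by
      rw [show 2 * a * d = a * (2 * d) by ring, ha.mul_right_eq_zero]
    rw [AddChar.sum_mulShift _ (isPrimitive_stdAddChar n), ZMod.card]
    simp only [h2ad]
    split_ifs with hd
    · rw [hb d hd, AddChar.map_zero_eq_one, one_mul]
    · rw [Nat.cast_zero, mul_zero]
  have hGG : G * (starRingEnd ℂ) G = n * #{d : ZMod n | 2 * d = 0} := by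
    rw [map_sum, sum_mul_sum, sum_comm]
    simp only [conj_stdAddChar]
    calc _ = ∑ y, ∑ d, stdAddChar (a * (y + d) ^ 2 + b * (y + d))
          * stdAddChar (-(a * y ^ 2 + b * y)) := by
          refine sum_congr rfl fun y _ => ?_
          rw [← Equiv.sum_comp (Equiv.addLeft y)]
          simp only [Equiv.coe_addLeft]
      _ = ∑ d, stdAddChar (a * d ^ 2 + b * d) * ∑ y, stdAddChar (y * (2 * a * d)) := by
          simp only [hdiff, mul_sum]
          exact sum_comm
      _ = _ := by
          simp only [horth]
          rw [sum_ite, sum_const_zero, add_zero, sum_const, nsmul_eq_mul, mul_comm]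
  rw [← Complex.ofReal_inj]
  push_cast
  rw [← Complex.mul_conj', hGG]

lemma norm_sum_stdAddChar_quadratic {a : ZMod n} (ha : IsUnit a) {b : ZMod n}
    (hb : ∀ d : ZMod n, 2 * d = 0 → a * d ^ 2 + b * d = 0) :
    ‖∑ x, stdAddChar (a * x ^ 2 + b * x)‖
      = Real.sqrt #{d : ZMod n | 2 * d = 0} * Real.sqrt n := by
  rw [← Real.sqrt_sq (norm_nonneg _), sq_norm_sum_stdAddChar_quadratic ha hb,
    Real.sqrt_mul (Nat.cast_nonneg _), mul_comm]

lemma one_le_sqrt_card_two_mul_eq_zero : 1 ≤ Real.sqrt #{d : ZMod n | 2 * d = 0} :=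
  Real.one_le_sqrt.mpr (by exact_mod_cast card_pos.mpr ⟨0, by simp⟩)

lemma sqrt_card_two_mul_eq_zero_le : Real.sqrt #{d : ZMod n | 2 * d = 0} ≤ Real.sqrt 2 := by
  have : #{d : ZMod n | 2 * d = 0} ≤ 2 := by
    simpa only [two_nsmul, two_mul] using IsAddCyclic.card_nsmul_eq_zero_le (α := ZMod n) two_pos
  exact Real.sqrt_le_sqrt (by exact_mod_cast this)

lemma intCast_quadratic_eq_zero_of_two_mul_eq_zero {a b : ℤ} (ha : Int.gcd a n = 1)
    (hb4 : (n : ℤ) % 4 = 0 → Even b) (hb2 : (n : ℤ) % 4 = 2 → Odd b) {d : ZMod n}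
    (hd : 2 * d = 0) : (a : ZMod n) * d ^ 2 + b * d = 0 := by
  set v := d.val
  rw [← natCast_zmod_val d] at hd ⊢
  have hdvd : n ∣ 2 * v := by rw [← natCast_eq_zero_iff]; push_cast; exact hd
  obtain ⟨t, ht⟩ := hdvd
  have hv := d.val_lt
  obtain hv0 | hnv : v = 0 ∨ (n : ℤ) = 2 * v := by
    rcases Nat.lt_or_ge t 2 with h | h
    · interval_cases t <;> omega
    · nlinarith
  · rw [show d.val = 0 from hv0]; simp
  have ha2 : ¬ Even a := fun hae => by
    have := (Int.isCoprime_iff_gcd_eq_one.mpr ha).isUnit_of_dvd' hae.two_dvd ⟨v, hnv⟩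
    norm_num [Int.isUnit_iff] at this
  have hpar : 2 ∣ a * v + b := by
    rw [← even_iff_two_dvd, Int.even_add, Int.even_mul]
    by_cases hve : Even (v : ℤ)
    · have := hb4 (by rw [Int.even_iff] at hve; omega)
      tauto
    · have := hb2 (by rw [Int.not_even_iff] at hve; omega)
      rw [← Int.not_even_iff_odd] at this
      tauto
  obtain ⟨s, hs⟩ := hpar
  have : ((a * v ^ 2 + b * v : ℤ) : ZMod n) = 0 := by
    rw [intCast_zmod_eq_zero_iff_dvd]
    exact ⟨s, by linear_combination (v : ℤ) * hs - s * hnv⟩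
  push_cast at this
  exact this

lemma exp_quadratic_div_eq_stdAddChar (a b k : ℤ) :
    Complex.exp (2 * Real.pi * Complex.I * ((a * k ^ 2 + b * k) / n))
      = stdAddChar (a * k ^ 2 + b * k : ZMod n) := by
  rw [show (a * k ^ 2 + b * k : ZMod n) = ((a * k ^ 2 + b * k : ℤ) : ZMod n) by push_cast; rfl,
    stdAddChar_coe]
  push_cast
  ring_nf

end ZMod

/-- **Weyl evaluation of incomplete quadratic Gauss sums.** There is an absolute constant
`A > 0` such that for every nonempty interval of integers `I = [L, U] ∩ ℤ` and all integers
`a, b, q` with `q ≥ 2`, `gcd(a,q) = 1`, and `b` even when `q ≡ 0 (mod 4)`, odd when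
`q ≡ 2 (mod 4)` (arbitrary when `q` is odd), the modulus of
`∑_{k ∈ I} e^{2πi(ak² + bk)/q}` equals `C⋅|I|/√q` up to an error `≤ A√(q ln q)`,
for some `1/2 ≤ C ≤ √2`. -/
theorem weyl_incomplete_gauss_sum :
    ∃ A : ℝ, 0 < A ∧
      ∀ (L U a b q : ℤ), L ≤ U → 2 ≤ q → Int.gcd a q = 1 →
        (q % 4 = 0 → Even b) → (q % 4 = 2 → Odd b) →
        ∃ C : ℝ, 1 / 2 ≤ C ∧ C ≤ Real.sqrt 2 ∧
          |‖∑ k ∈ Finset.Icc L U,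
              Complex.exp (2 * (Real.pi : ℂ) * Complex.I *
                (((a : ℂ) * (k : ℂ) ^ 2 + (b : ℂ) * (k : ℂ)) / (q : ℂ)))‖
            - C * ((Finset.Icc L U).card : ℝ) / Real.sqrt q|
          ≤ A * Real.sqrt (q * Real.log q) := by
  refine ⟨5 + 2, by norm_num, fun L U a b q _ hq ha hb4 hb2 => ?_⟩
  lift q to ℕ using (by omega)
  have : NeZero q := ⟨by omega⟩
  have hq2 : 2 ≤ q := by exact_mod_cast hq
  have hunit : IsUnit (a : ZMod q) := (ZMod.coe_int_isUnit_iff_isCoprime a q).mpr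
    (Int.isCoprime_iff_gcd_eq_one.mpr (by rwa [Int.gcd_comm]))
  set N := #(Icc L U)
  have hIcc : Icc L U = Ico L (L + (q * (N / q) + N % q : ℕ)) := by
    rw [Nat.div_add_mod]
    ext k
    simp only [mem_Icc, mem_Ico, N, Int.card_Icc]
    omega
  push_cast
  simp only [ZMod.exp_quadratic_div_eq_stdAddChar]
  rw [hIcc, ZMod.sum_Ico_intCast_mul_add
    fun x : ZMod q => ZMod.stdAddChar ((a : ZMod q) * x ^ 2 + (b : ZMod q) * x)]
  have hG := ZMod.norm_sum_stdAddChar_quadratic hunit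
    fun d hd => ZMod.intCast_quadratic_eq_zero_of_two_mul_eq_zero ha hb4 hb2 hd
  refine ⟨_, le_trans (by norm_num) (ZMod.one_le_sqrt_card_two_mul_eq_zero (n := q)),
    ZMod.sqrt_card_two_mul_eq_zero_le, ?_⟩
  exact abs_norm_div_nsmul_add_sub_le_mul_sqrt _ _ hq2 hG ZMod.sqrt_card_two_mul_eq_zero_le
    (ZMod.norm_sum_Ico_stdAddChar_quadratic_le hq2 hunit b L (Nat.mod_lt N (by omega)).le)
end

section
/- There exists an absolute constant A > 0 such that for every finite interval of integers I ⊂ ℤ with |I| < q, and all integers a, b, q with q ≥ 2, gcd(a, q) = 1, and b arbitrary when q is odd, b even when q ≡ 0 (mod 4), b odd when q ≡ 2 (mod 4), one has |∑_{k ∈ I} e^{2πi(a k² + b k)/q}| ≤ A √(q ln q). -/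
open Finset

noncomputable def ee (x : ℝ) : ℂ := Complex.exp (((2 * Real.pi * x : ℝ) : ℂ) * Complex.I)

lemma ee_add (x y : ℝ) : ee (x + y) = ee x * ee y := by
  rw [ee, ee, ee, ← Complex.exp_add]; congr 1; push_cast; ring

lemma ee_ne_zero (x : ℝ) : ee x ≠ 0 := Complex.exp_ne_zero _

lemma abs_ee (x : ℝ) : ‖ee x‖ = 1 := Complex.norm_exp_ofReal_mul_I _

lemma ee_int (n : ℤ) : ee n = 1 := by
  rw [ee, show (((2 * Real.pi * (n:ℝ) : ℝ)) : ℂ) * Complex.I = (n : ℂ) * (2 * Real.pi * Complex.I) by push_cast; ring]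
  exact Complex.exp_int_mul_two_pi_mul_I n

lemma ee_zpow (x : ℝ) (k : ℤ) : ee (x * k) = ee x ^ k := by
  rw [ee, ee, show (((2 * Real.pi * (x * k) : ℝ)) : ℂ) * Complex.I = (k : ℂ) * ((((2 * Real.pi * x : ℝ)) : ℂ) * Complex.I) by push_cast; ring]
  exact Complex.exp_int_mul _ k

lemma ee_conj (x : ℝ) : (starRingEnd ℂ) (ee x) = ee (-x) := by
  rw [ee, ee, ← Complex.exp_conj, map_mul, Complex.conj_I, Complex.conj_ofReal]
  congr 1; push_cast; ring

lemma abs_exp_mul_I_sub' (y : ℝ) :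
    ‖1 - Complex.exp ((y : ℂ) * Complex.I)‖ = 2 * |Real.sin (y / 2)| := by
  rw [Complex.exp_mul_I, ← Complex.ofReal_cos, ← Complex.ofReal_sin]
  rw [Complex.norm_def, Complex.normSq_apply]
  have hre : ((1 : ℂ) - (↑(Real.cos y) + ↑(Real.sin y) * Complex.I)).re = 1 - Real.cos y := by simp [Complex.cos_ofReal_re]
  have him : ((1 : ℂ) - (↑(Real.cos y) + ↑(Real.sin y) * Complex.I)).im = -Real.sin y := by simp [Complex.sin_ofReal_re]
  rw [hre, him]
  have hc : Real.cos y = Real.cos (2 * (y / 2)) := by ring_nf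
  have hs : Real.sin y = Real.sin (2 * (y / 2)) := by ring_nf
  have hs2 : (1 - Real.cos y) * (1 - Real.cos y) + -Real.sin y * -Real.sin y
      = (2 * |Real.sin (y / 2)|) ^ 2 := by
    rw [hc, hs, Real.cos_two_mul', Real.sin_two_mul]
    have hpy := Real.sin_sq_add_cos_sq (y / 2)
    have habs : |Real.sin (y / 2)| ^ 2 = Real.sin (y / 2) ^ 2 := sq_abs _
    nlinarith [habs]
  rw [hs2, Real.sqrt_sq (by positivity)]

lemma abs_one_sub_ee (x : ℝ) : ‖1 - ee x‖ = 2 * |Real.sin (Real.pi * x)| := by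
  rw [ee, abs_exp_mul_I_sub']
  congr 2
  ring_nf

lemma telescope (z : ℂ) (hz : z ≠ 0) (L U : ℤ) (hU : L - 1 ≤ U) :
    (z - 1) * ∑ k ∈ Icc L U, z ^ k = z ^ (U + 1) - z ^ L := by
  refine Int.le_induction (motive := fun V _ => (z - 1) * ∑ k ∈ Icc L V, z ^ k = z ^ (V + 1) - z ^ L)
    ?_ ?_ U hU
  · show (z - 1) * ∑ k ∈ Icc L (L - 1), z ^ k = z ^ (L - 1 + 1) - z ^ L
    rw [show L - 1 + 1 = L by ring]
    rw [Finset.Icc_eq_empty (by omega)]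
    simp
  · intro V hV ih
    show (z - 1) * ∑ k ∈ Icc L (V + 1), z ^ k = z ^ (V + 1 + 1) - z ^ L
    have h1 : Finset.Icc L (V + 1) = insert (V + 1) (Finset.Icc L V) := by
      ext k; simp only [Finset.mem_Icc, Finset.mem_insert]; omega
    rw [h1, Finset.sum_insert (by simp), mul_add, ih]
    rw [zpow_add₀ hz (V + 1) 1, zpow_one]
    ring

lemma geom_abs (z : ℂ) (hz1 : ‖z‖ = 1) (hne : z ≠ 1) (L U : ℤ) :
    ‖∑ k ∈ Icc L U, z ^ k‖ ≤ 2 / ‖1 - z‖ := by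
  have hz : z ≠ 0 := by intro h; rw [h] at hz1; simp at hz1
  have habs : 0 < ‖1 - z‖ := by
    rw [norm_pos_iff]; intro h; apply hne; linear_combination -h
  rcases le_or_gt L U with h | h
  · have ht := telescope z hz L U (by omega)
    have hzm : ‖z - 1‖ ≠ 0 := by
      rw [show z - 1 = -(1 - z) by ring, norm_neg]; positivity
    have heq : ‖∑ k ∈ Icc L U, z ^ k‖
        = ‖z ^ (U + 1) - z ^ L‖ / ‖z - 1‖ := by
      rw [← ht, norm_mul]
      field_simp
    have hnum : ‖z ^ (U + 1) - z ^ L‖ ≤ 2 := by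
      calc ‖z ^ (U + 1) - z ^ L‖ ≤ ‖z ^ (U + 1)‖ + ‖z ^ L‖ := norm_sub_le _ _
        _ = 2 := by
            rw [norm_zpow, norm_zpow, hz1, one_zpow, one_zpow]; norm_num
    rw [heq, show z - 1 = -(1 - z) by ring, norm_neg]
    gcongr
  · rw [Finset.Icc_eq_empty (by omega)]
    simp; positivity

lemma two_mul_le_sin {x : ℝ} (h0 : 0 ≤ x) (h1 : x ≤ 1/2) : 2 * x ≤ Real.sin (Real.pi * x) := by
  have hpi := Real.pi_pos
  have h := Real.mul_le_sin (x := Real.pi * x) (by positivity) (by nlinarith)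
  calc 2 * x = 2 / Real.pi * (Real.pi * x) := by field_simp
    _ ≤ Real.sin (Real.pi * x) := h

lemma sin_lb_aux {r q : ℤ} (h0 : 0 < r) (h2 : 2 * r ≤ q) :
    2 * (r : ℝ) / q ≤ |Real.sin (Real.pi * (r / q))| := by
  have hq : (0:ℝ) < q := by
    have : (0:ℤ) < q := by omega
    exact_mod_cast this
  have hx0 : (0:ℝ) ≤ (r:ℝ)/q := by positivity
  have hx1 : (r:ℝ)/q ≤ 1/2 := by
    rw [div_le_div_iff₀ hq (by norm_num)]
    have : (2 * r : ℝ) ≤ q := by exact_mod_cast h2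
    linarith
  have h := two_mul_le_sin hx0 hx1
  calc 2 * (r:ℝ) / q = 2 * ((r:ℝ)/q) := by ring
    _ ≤ Real.sin (Real.pi * ((r:ℝ)/q)) := h
    _ ≤ |Real.sin (Real.pi * ((r:ℝ)/q))| := le_abs_self _

lemma sin_lb {r q : ℤ} (h0 : 0 < r) (h1 : r < q) :
    2 * ((min r (q - r) : ℤ) : ℝ) / q ≤ |Real.sin (Real.pi * (r / q))| := by
  have hqz : (0:ℝ) < q := by
    have : (0:ℤ) < q := by omega
    exact_mod_cast this
  rcases le_total (2 * r) q with h2 | h2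
  · have hm : min r (q - r) = r := min_eq_left (by omega)
    rw [hm]
    exact sin_lb_aux h0 h2
  · have hm : min r (q - r) = q - r := min_eq_right (by omega)
    rw [hm]
    have hsin : Real.sin (Real.pi * ((r:ℝ) / q)) = Real.sin (Real.pi * (((q - r : ℤ) : ℝ) / q)) := by
      rw [← Real.sin_pi_sub]
      congr 1
      push_cast
      field_simp
    rw [hsin]
    exact sin_lb_aux (by omega) (by omega)

lemma sum_inv_le (m : ℤ) (hm : 1 ≤ m) :
    ∑ r ∈ Icc (1:ℤ) m, (1:ℝ)/r ≤ 1 + Real.log m := by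
  refine Int.le_induction (motive := fun m _ => ∑ r ∈ Icc (1:ℤ) m, (1:ℝ)/r ≤ 1 + Real.log m) ?_ ?_ m hm
  · simp
  · intro n hn ih
    show ∑ r ∈ Icc (1:ℤ) (n+1), (1:ℝ)/r ≤ 1 + Real.log ((n+1 : ℤ) : ℝ)
    have h1 : Finset.Icc (1:ℤ) (n+1) = insert (n+1) (Finset.Icc (1:ℤ) n) := by
      ext k; simp only [Finset.mem_Icc, Finset.mem_insert]; omega
    rw [h1, Finset.sum_insert (by simp)]
    have hnR : (1:ℝ) ≤ (n:ℝ) := by exact_mod_cast hn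
    have hx : (0:ℝ) < ((n:ℝ)+1)/n := by positivity
    have hlog := Real.one_sub_inv_le_log_of_pos hx
    have hinv : (((n:ℝ)+1)/n)⁻¹ = (n:ℝ)/(n+1) := by
      rw [inv_div]
    have hdiv : Real.log (((n:ℝ)+1)/n) = Real.log ((n:ℝ)+1) - Real.log n := by
      rw [Real.log_div (by linarith) (by linarith)]
    rw [hinv, hdiv] at hlog
    have hfr : (1:ℝ) - (n:ℝ)/(n+1) = 1/((n:ℝ)+1) := by
      field_simp
      ring
    rw [hfr] at hlog
    have : (1:ℝ)/((n:ℤ)+1 : ℤ) = 1/((n:ℝ)+1) := by push_cast; ring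
    push_cast
    linarith [ih]

lemma abs_sum_ee_le (s : Finset ℤ) (g : ℤ → ℝ) :
    ‖∑ k ∈ s, ee (g k)‖ ≤ s.card := by
  calc ‖∑ k ∈ s, ee (g k)‖ ≤ ∑ k ∈ s, ‖ee (g k)‖ := by
        simpa using norm_sum_le s fun k => ee (g k)
    _ = s.card := by simp [abs_ee]

lemma fiber_card (a q A B r : ℤ) (hq : 2 ≤ q) (hco : Int.gcd a q = 1) (hAB : B - A ≤ 2*q) :
    (((Icc A B).filter (fun h => (2*a*h) % q = r)).card : ℝ) ≤ 5 := by
  have hcard : ((Icc A B).filter (fun h => (2*a*h) % q = r)).card ≤ 5 := by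
    have h5 : (Finset.range 5).card = 5 := by simp
    rw [← h5]
    apply Finset.card_le_card_of_injOn (fun h => (2*(h - A) / q).toNat)
    · intro h hh
      rw [Finset.mem_coe, Finset.mem_filter, Finset.mem_Icc] at hh
      simp only [Finset.mem_coe, Finset.mem_range]
      have hd0 : 0 ≤ 2*(h - A) / q := Int.ediv_nonneg (by omega) (by omega)
      have hd4 : 2*(h - A) / q ≤ 4 := by
        have e1 : 2*(h - A) / q ≤ 4*q / q := Int.ediv_le_ediv (by omega) (by omega)
        rwa [Int.mul_ediv_cancel 4 (by omega)] at e1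
      omega
    · intro h hh h' hh' heq
      rw [Finset.mem_coe, Finset.mem_filter, Finset.mem_Icc] at hh hh'
      -- q divides 2*a*(h - h')
      have hmod : (2*a*h) % q = (2*a*h') % q := by rw [hh.2, hh'.2]
      have hdvd1 : q ∣ 2*a*h' - 2*a*h := Int.ModEq.dvd hmod
      have hdvd2 : q ∣ a * (2*(h' - h)) := by
        rwa [show 2*a*h' - 2*a*h = a * (2*(h' - h)) from by ring] at hdvd1
      have hcop : IsCoprime (q:ℤ) (a:ℤ) := by
        rw [Int.isCoprime_iff_gcd_eq_one, Int.gcd_comm]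
        exact hco
      have hdvd3 : q ∣ 2*(h' - h) := hcop.dvd_of_dvd_mul_left hdvd2
      have hdvd4 : q ∣ 2*(h' - A) - 2*(h - A) := by
        rwa [show 2*(h' - A) - 2*(h - A) = 2*(h' - h) from by ring]
      have hmod2 : (2*(h - A)) % q = (2*(h' - A)) % q := Int.modEq_iff_dvd.mpr hdvd4
      simp only at heq
      have hdiveq : 2*(h - A) / q = 2*(h' - A) / q := by
        have n1 : 0 ≤ 2*(h - A) / q := Int.ediv_nonneg (by omega) (by omega)
        have n2 : 0 ≤ 2*(h' - A) / q := Int.ediv_nonneg (by omega) (by omega)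
        omega
      have e1 := Int.mul_ediv_add_emod (2*(h - A)) q
      have e2 := Int.mul_ediv_add_emod (2*(h' - A)) q
      rw [hdiveq, hmod2] at e1
      omega
  exact_mod_cast Nat.cast_le.mpr hcard

/-- **Short incomplete quadratic Gauss sums.** There is an absolute constant `A > 0` such
that for every interval of integers `I = [L, U] ∩ ℤ` with `|I| < q` and all integers
`a, b, q` with `q ≥ 2`, `gcd(a,q) = 1`, and `b` even when `q ≡ 0 (mod 4)`, odd when
`q ≡ 2 (mod 4)` (arbitrary when `q` is odd), one has
`|∑_{k ∈ I} e^{2πi(ak² + bk)/q}| ≤ A √(q ln q)`. -/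
theorem short_incomplete_gauss_sum_bound :
    ∃ A : ℝ, 0 < A ∧
      ∀ (L U a b q : ℤ), ((Finset.Icc L U).card : ℤ) < q → 2 ≤ q → Int.gcd a q = 1 →
        (q % 4 = 0 → Even b) → (q % 4 = 2 → Odd b) →
        ‖(∑ k ∈ Finset.Icc L U,
            Complex.exp (2 * (Real.pi : ℂ) * Complex.I *
              (((a : ℂ) * (k : ℂ) ^ 2 + (b : ℂ) * (k : ℂ)) / (q : ℂ))))‖
          ≤ A * Real.sqrt (q * Real.log q) := by
  refine ⟨5, by norm_num, ?_⟩
  intro L U a b q hcard hq hgcd _ _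
  have hq0 : (0:ℝ) < q := by exact_mod_cast (by omega : (0:ℤ) < q)
  have hqne : (q:ℝ) ≠ 0 := ne_of_gt hq0
  have hlogq : 0 ≤ Real.log q := Real.log_nonneg (by exact_mod_cast (by omega : (1:ℤ) ≤ q))
  set f : ℤ → ℝ := fun k => ((a * k^2 + b * k : ℤ) : ℝ) / q with hf
  have hsummand : ∀ k : ℤ, Complex.exp (2 * (Real.pi : ℂ) * Complex.I *
      (((a : ℂ) * (k : ℂ) ^ 2 + (b : ℂ) * (k : ℂ)) / (q : ℂ))) = ee (f k) := by
    intro k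
    rw [ee, hf]
    congr 1
    push_cast
    ring
  rw [Finset.sum_congr rfl (fun k _ => hsummand k)]
  rcases lt_or_ge U L with hUL | hLU
  · rw [Finset.Icc_eq_empty (by omega)]
    simp only [Finset.sum_empty, norm_zero]
    positivity
  -- main case
  set N : ℕ := (Finset.Icc L U).card with hN
  have hNval : (N:ℤ) = U + 1 - L := by
    rw [hN, Int.card_Icc, Int.toNat_of_nonneg (by omega)]
  have hNq : (N:ℤ) < q := hcard
  set S : ℂ := ∑ k ∈ Finset.Icc L U, ee (f k) with hS
  set θ : ℤ → ℝ := fun h => ((2*a*h : ℤ) : ℝ)/q with hθ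
  set c : ℤ → ℝ := fun h => ((a*h^2 + b*h : ℤ) : ℝ)/q with hc
  set J : ℤ → Finset ℤ := fun h => Finset.Icc (max L (L - h)) (min U (U - h)) with hJdef
  set H : Finset ℤ := Finset.Icc (L - U) (U - L) with hH
  -- J h as a filter
  have hJ : ∀ h, J h = (Finset.Icc L U).filter (fun l => l + h ∈ Finset.Icc L U) := by
    intro h
    ext l
    simp only [hJdef, Finset.mem_Icc, Finset.mem_filter, max_le_iff, le_min_iff]
    omega
  -- Step A : Weyl differencing identity
  have key : S * (starRingEnd ℂ) S
      = ∑ h ∈ H, ∑ l ∈ J h, ee (f (l + h)) * (starRingEnd ℂ) (ee (f l)) := by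
    have e1 : ∑ h ∈ H, ∑ l ∈ J h, ee (f (l + h)) * (starRingEnd ℂ) (ee (f l))
        = ∑ h ∈ H, ∑ l ∈ Finset.Icc L U,
            if l + h ∈ Finset.Icc L U then ee (f (l + h)) * (starRingEnd ℂ) (ee (f l)) else 0 := by
      refine Finset.sum_congr rfl fun h _ => ?_
      rw [hJ h, Finset.sum_filter]
    rw [e1, Finset.sum_comm]
    have e2 : ∀ l ∈ Finset.Icc L U,
        (∑ h ∈ H, if l + h ∈ Finset.Icc L U then ee (f (l + h)) * (starRingEnd ℂ) (ee (f l)) else 0)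
        = ∑ k ∈ Finset.Icc L U, ee (f k) * (starRingEnd ℂ) (ee (f l)) := by
      intro l hl
      rw [← Finset.sum_filter]
      refine Finset.sum_nbij' (i := fun h => l + h) (j := fun k => k - l) ?_ ?_ ?_ ?_ ?_
      · intro h hh
        simp only [Finset.mem_filter] at hh
        exact hh.2
      · intro k hk
        simp only [Finset.mem_filter, hH, Finset.mem_Icc] at *
        omega
      · intro h _; simp
      · intro k _; simp
      · intro h _; norm_num
    rw [Finset.sum_congr rfl e2]
    rw [map_sum, Finset.sum_mul_sum, Finset.sum_comm]
  -- Step C : term rewrite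
  have hterm : ∀ h l : ℤ, ee (f (l + h)) * (starRingEnd ℂ) (ee (f l)) = ee (c h) * ee (θ h * l) := by
    intro h l
    rw [ee_conj, ← ee_add, ← ee_add]
    congr 1
    show ((a*(l+h)^2 + b*(l+h) : ℤ):ℝ)/q + -(((a*l^2 + b*l : ℤ):ℝ)/q)
        = ((a*h^2 + b*h : ℤ):ℝ)/q + ((2*a*h : ℤ):ℝ)/q * l
    push_cast
    field_simp
    ring
  -- the residue-indexed bound function
  set Fb : ℤ → ℝ := fun r => if r = 0 then (N:ℝ) else (q:ℝ) / (2 * ((min r (q - r) : ℤ) : ℝ))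
    with hFb
  -- Step D : per-h bound
  have hinner : ∀ h ∈ H, ‖∑ l ∈ J h, ee (f (l + h)) * (starRingEnd ℂ) (ee (f l))‖
      ≤ Fb ((2*a*h) % q) := by
    intro h _
    rw [Finset.sum_congr rfl (fun l _ => hterm h l), ← Finset.mul_sum, norm_mul, abs_ee, one_mul]
    have hcardJ : ‖∑ l ∈ J h, ee (θ h * l)‖ ≤ (N : ℝ) := by
      refine (abs_sum_ee_le _ _).trans ?_
      have : (J h).card ≤ N := by
        apply Finset.card_le_card
        rw [hJdef]
        exact Finset.Icc_subset_Icc (le_max_left _ _) (min_le_left _ _)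
      exact_mod_cast this
    by_cases hr : (2*a*h) % q = 0
    · rw [hFb]
      simp only [hr, if_pos]
      exact hcardJ
    · have hr0 : 0 < (2*a*h) % q :=
        lt_of_le_of_ne (Int.emod_nonneg _ (by omega)) (Ne.symm hr)
      have hrq : (2*a*h) % q < q := Int.emod_lt_of_pos _ (by omega)
      set r : ℤ := (2*a*h) % q with hrdef
      have hmin0 : (0:ℝ) < ((min r (q - r) : ℤ):ℝ) := by
        exact_mod_cast (by omega : (0:ℤ) < min r (q - r))
      -- e(θ h) = e(r/q)
      have hθeq : θ h = (((2*a*h) / q : ℤ) : ℝ) + (r:ℝ)/q := by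
        have hdm : (2*a*h : ℤ) = q * ((2*a*h)/q) + r := (Int.mul_ediv_add_emod _ _).symm
        show ((2*a*h : ℤ):ℝ)/q = (((2*a*h)/q : ℤ):ℝ) + (r:ℝ)/q
        rw [show ((2*a*h : ℤ):ℝ) = ((q * ((2*a*h)/q) + r : ℤ) : ℝ) from by exact_mod_cast congrArg (Int.cast : ℤ → ℝ) hdm]
        push_cast
        field_simp
      have hz : ee (θ h) = ee ((r:ℝ)/q) := by
        rw [hθeq, ee_add, ee_int, one_mul]
      have hsum : ∑ l ∈ J h, ee (θ h * l) = ∑ l ∈ J h, (ee ((r:ℝ)/q)) ^ l := by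
        refine Finset.sum_congr rfl fun l _ => ?_
        rw [ee_zpow, hz]
      have hlb : 4 * ((min r (q - r) : ℤ):ℝ)/q ≤ ‖1 - ee ((r:ℝ)/q)‖ := by
        rw [abs_one_sub_ee]
        have hs := sin_lb hr0 hrq
        calc 4 * ((min r (q - r) : ℤ):ℝ)/q = 2 * (2 * ((min r (q - r) : ℤ):ℝ)/q) := by ring
          _ ≤ 2 * |Real.sin (Real.pi * ((r:ℝ)/q))| := by linarith
      have hpos : 0 < ‖1 - ee ((r:ℝ)/q)‖ := lt_of_lt_of_le (by positivity) hlb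
      have hne1 : ee ((r:ℝ)/q) ≠ 1 := by
        intro e
        rw [e] at hpos
        simp at hpos
      rw [hFb]
      simp only [hr, if_neg, ite_false]
      calc ‖∑ l ∈ J h, ee (θ h * l)‖
          = ‖∑ l ∈ J h, (ee ((r:ℝ)/q)) ^ l‖ := by rw [hsum]
        _ ≤ 2 / ‖1 - ee ((r:ℝ)/q)‖ := geom_abs _ (abs_ee _) hne1 _ _
        _ ≤ (q:ℝ) / (2 * ((min r (q - r) : ℤ):ℝ)) := by
            rw [div_le_div_iff₀ hpos (by positivity)]
            have hmul : (q:ℝ) * (4 * ((min r (q - r) : ℤ):ℝ)/q) = 4 * ((min r (q - r) : ℤ):ℝ) := by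
              field_simp
            nlinarith [mul_le_mul_of_nonneg_left hlb (le_of_lt hq0)]
  -- Step B : |S|^2 bounded by sum of Fb
  have habsS : ‖S‖ ^ 2 ≤ ∑ h ∈ H, Fb ((2*a*h) % q) := by
    have e0 : ‖S‖ ^ 2 = ‖S * (starRingEnd ℂ) S‖ := by
      rw [norm_mul, Complex.norm_conj]
      ring
    rw [e0, key]
    refine le_trans ?_ (Finset.sum_le_sum hinner)
    simpa using
      norm_sum_le H (fun h => ∑ l ∈ J h, ee (f (l + h)) * (starRingEnd ℂ) (ee (f l)))
  -- Step E : fiberwise counting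
  have hmap : ∀ h ∈ H, (2*a*h) % q ∈ Finset.Ico (0:ℤ) q := by
    intro h _
    rw [Finset.mem_Ico]
    exact ⟨Int.emod_nonneg _ (by omega), Int.emod_lt_of_pos _ (by omega)⟩
  have hFb_nonneg : ∀ r ∈ Finset.Ico (0:ℤ) q, 0 ≤ Fb r := by
    intro r hrm
    rw [Finset.mem_Ico] at hrm
    simp only [hFb]
    by_cases h0 : r = 0
    · simp only [h0, ite_true, if_pos]
      positivity
    · rw [if_neg h0]
      have hp : (0:ℝ) < ((min r (q - r) : ℤ):ℝ) := by
        exact_mod_cast (by omega : (0:ℤ) < min r (q - r))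
      positivity
  have hfiber : ∑ h ∈ H, Fb ((2*a*h) % q) ≤ 5 * ∑ r ∈ Finset.Ico (0:ℤ) q, Fb r := by
    calc ∑ h ∈ H, Fb ((2*a*h) % q)
        = ∑ r ∈ Finset.Ico (0:ℤ) q, ∑ h ∈ H.filter (fun h => (2*a*h) % q = r), Fb r :=
          (Finset.sum_fiberwise_of_maps_to' hmap Fb).symm
      _ ≤ ∑ r ∈ Finset.Ico (0:ℤ) q, 5 * Fb r := by
          refine Finset.sum_le_sum fun r hrm => ?_
          rw [Finset.sum_const, nsmul_eq_mul]
          refine mul_le_mul_of_nonneg_right ?_ (hFb_nonneg r hrm)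
          exact fiber_card a q (L - U) (U - L) r hq hgcd (by omega)
      _ = 5 * ∑ r ∈ Finset.Ico (0:ℤ) q, Fb r := by rw [Finset.mul_sum]
  -- Step F : evaluating the residue sum
  have hIco : Finset.Ico (0:ℤ) q = insert 0 (Finset.Icc (1:ℤ) (q-1)) := by
    ext r
    simp only [Finset.mem_Ico, Finset.mem_Icc, Finset.mem_insert]
    omega
  have hFb0 : Fb 0 = (N:ℝ) := by rw [hFb]; simp
  have hsum_tail : ∑ r ∈ Finset.Icc (1:ℤ) (q-1), Fb r ≤ (q:ℝ) * (1 + Real.log q) := by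
    have step1 : ∀ r ∈ Finset.Icc (1:ℤ) (q-1),
        Fb r ≤ (q:ℝ)/2 * (1/(r:ℝ)) + (q:ℝ)/2 * (1/(((q - r : ℤ)):ℝ)) := by
      intro r hrm
      rw [Finset.mem_Icc] at hrm
      simp only [hFb]
      rw [if_neg (by omega : ¬ r = 0)]
      have hrpos : (0:ℝ) < (r:ℝ) := by exact_mod_cast (by omega : (0:ℤ) < r)
      have hqrpos : (0:ℝ) < ((q - r : ℤ):ℝ) := by exact_mod_cast (by omega : (0:ℤ) < q - r)
      rcases le_total r (q - r) with hmr | hmr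
      · rw [min_eq_left hmr]
        have e1 : (q:ℝ)/(2*(r:ℝ)) = (q:ℝ)/2 * (1/(r:ℝ)) := by ring
        rw [e1]
        have : (0:ℝ) ≤ (q:ℝ)/2 * (1/((q - r : ℤ):ℝ)) := by positivity
        linarith
      · rw [min_eq_right hmr]
        have e1 : (q:ℝ)/(2*((q - r:ℤ):ℝ)) = (q:ℝ)/2 * (1/((q - r:ℤ):ℝ)) := by ring
        rw [e1]
        have : (0:ℝ) ≤ (q:ℝ)/2 * (1/(r:ℝ)) := by positivity
        linarith
    refine (Finset.sum_le_sum step1).trans ?_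
    rw [Finset.sum_add_distrib]
    have hrev : ∑ r ∈ Finset.Icc (1:ℤ) (q-1), (q:ℝ)/2 * (1/((q - r : ℤ):ℝ))
        = ∑ r ∈ Finset.Icc (1:ℤ) (q-1), (q:ℝ)/2 * (1/(r:ℝ)) := by
      refine Finset.sum_nbij' (i := fun r => q - r) (j := fun r => q - r) ?_ ?_ ?_ ?_ ?_
      · intro r hrm
        rw [Finset.mem_Icc] at hrm
        show q - r ∈ Finset.Icc (1:ℤ) (q-1)
        rw [Finset.mem_Icc]
        omega
      · intro r hrm
        rw [Finset.mem_Icc] at hrm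
        show q - r ∈ Finset.Icc (1:ℤ) (q-1)
        rw [Finset.mem_Icc]
        omega
      · intro r _
        show q - (q - r) = r
        omega
      · intro r _
        show q - (q - r) = r
        omega
      · intro r _
        rfl
    rw [hrev, ← Finset.mul_sum]
    have hharm := sum_inv_le (q - 1) (by omega)
    have hlogmono : Real.log ((q - 1 : ℤ):ℝ) ≤ Real.log q := by
      have h1 : (0:ℝ) < ((q - 1 : ℤ):ℝ) := by exact_mod_cast (by omega : (0:ℤ) < q - 1)
      have h2 : ((q - 1 : ℤ):ℝ) ≤ (q:ℝ) := by exact_mod_cast (by omega : (q - 1 : ℤ) ≤ q)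
      exact Real.log_le_log h1 h2
    have hsum_nonneg : (0:ℝ) ≤ ∑ r ∈ Finset.Icc (1:ℤ) (q-1), 1/(r:ℝ) := by
      apply Finset.sum_nonneg
      intro r hrm
      rw [Finset.mem_Icc] at hrm
      have : (0:ℝ) < (r:ℝ) := by exact_mod_cast (by omega : (0:ℤ) < r)
      positivity
    have e2 : ((q:ℝ)/2 * ∑ r ∈ Finset.Icc (1:ℤ) (q-1), 1/(r:ℝ))
        + ((q:ℝ)/2 * ∑ r ∈ Finset.Icc (1:ℤ) (q-1), 1/(r:ℝ))
        = (q:ℝ) * ∑ r ∈ Finset.Icc (1:ℤ) (q-1), 1/(r:ℝ) := by ring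
    rw [e2]
    calc (q:ℝ) * ∑ r ∈ Finset.Icc (1:ℤ) (q-1), 1/(r:ℝ)
        ≤ (q:ℝ) * (1 + Real.log ((q-1:ℤ):ℝ)) := by
          apply mul_le_mul_of_nonneg_left hharm (le_of_lt hq0)
      _ ≤ (q:ℝ) * (1 + Real.log q) := by
          apply mul_le_mul_of_nonneg_left (by linarith) (le_of_lt hq0)
  -- Step G : numerics
  have hNle : (N:ℝ) ≤ (q:ℝ) := by exact_mod_cast le_of_lt hNq
  have hlog2 : (0.6931471803 : ℝ) < Real.log q := by
    refine lt_of_lt_of_le Real.log_two_gt_d9 ?_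
    have h2q : (2:ℝ) ≤ (q:ℝ) := by exact_mod_cast hq
    exact Real.log_le_log (by norm_num) h2q
  have final2 : ‖S‖ ^ 2 ≤ 25 * ((q:ℝ) * Real.log q) := by
    have c1 : ∑ r ∈ Finset.Ico (0:ℤ) q, Fb r = (N:ℝ) + ∑ r ∈ Finset.Icc (1:ℤ) (q-1), Fb r := by
      rw [hIco, Finset.sum_insert (by simp), hFb0]
    have chain : ‖S‖ ^ 2 ≤ 5 * ((N:ℝ) + (q:ℝ) * (1 + Real.log q)) := by
      refine habsS.trans (hfiber.trans ?_)
      rw [c1]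
      have := hsum_tail
      nlinarith
    nlinarith [hq0, hlog2, hNle, chain]
  calc ‖S‖ = Real.sqrt (‖S‖ ^ 2) := (Real.sqrt_sq (by positivity)).symm
    _ ≤ Real.sqrt (25 * ((q:ℝ) * Real.log q)) := Real.sqrt_le_sqrt final2
    _ = 5 * Real.sqrt ((q:ℝ) * Real.log q) := by
        rw [Real.sqrt_mul (by norm_num : (0:ℝ) ≤ 25), show (25:ℝ) = 5^2 by norm_num,
          Real.sqrt_sq (by norm_num : (0:ℝ) ≤ 5)]
end

section
/- Let φ : ℝ → ℂ be a Schwartz function whose Fourier transform φ̂ is supported in (−1,1). Then for every N ≥ 1 there exists a constant C_N > 0 such that for all t ≥ 0 and all x ∈ ℝ with |x| > 2t, one has |∫_ℝ φ̂(ξ) e^{−iπtξ² + 2πi xξ} dξ| ≤ C_N |x|^{−N}. -/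
/-! The phase `ψ(ξ) = -πtξ² + 2πxξ` has `ψ'(ξ) = 2πx(1 - sξ)` with `s = t / x`, and `|sξ| ≤ 1/2`
on the support `|ξ| ≤ 1` of `φ̂`, so `ψ'` is comparable to `x` there. Each integration by parts
against `e^{iψ}` thus gains a factor `x⁻¹`. After regularising `1 / (2π(1 - sξ))` outside
`|sξ| ≤ 1/2`, the amplitude left after `n` steps is `x⁻ⁿ Aₙ(s, ξ)` with `Aₙ` smooth in both
variables and supported in `|ξ| ≤ 1`, hence bounded uniformly in `|s| ≤ 1/2` by compactness. -/

open FourierTransform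

noncomputable section

namespace NonstationaryPhase

open MeasureTheory Set Real
open scoped ContDiff

def cutoff : ContDiffBump (0 : ℝ) := ⟨1 / 2, 9 / 10, by norm_num, by norm_num⟩

def regDenom (y : ℝ) : ℝ := 1 - y * cutoff y

lemma regDenom_of_abs_le {y : ℝ} (hy : |y| ≤ 1 / 2) : regDenom y = 1 - y := by
  have hy' : y ∈ Metric.closedBall 0 cutoff.rIn := by
    rw [Metric.mem_closedBall, Real.dist_eq, sub_zero]
    exact hy
  rw [regDenom, cutoff.one_of_mem_closedBall hy', mul_one]

lemma abs_mul_cutoff_le (y : ℝ) : |y * cutoff y| ≤ 9 / 10 := by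
  rcases le_or_gt (9 / 10) |y| with hy | hy
  · rw [cutoff.zero_of_le_dist (by rw [Real.dist_eq, sub_zero]; exact hy)]
    norm_num
  · rw [abs_mul, abs_of_nonneg cutoff.nonneg]
    simpa using mul_le_mul hy.le cutoff.le_one cutoff.nonneg (by norm_num)

lemma regDenom_pos (y : ℝ) : 0 < regDenom y := by
  have := (abs_le.mp (abs_mul_cutoff_le y)).2
  rw [regDenom]
  linarith

lemma contDiff_regDenom : ContDiff ℝ ∞ regDenom :=
  contDiff_const.sub (contDiff_id.mul cutoff.contDiff)

def ibpWeight (p : ℝ × ℝ) : ℂ := ((2 * π * regDenom (p.1 * p.2))⁻¹ : ℝ)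

lemma contDiff_ibpWeight : ContDiff ℝ ∞ ibpWeight :=
  Complex.ofRealCLM.contDiff.comp <|
    (contDiff_const.mul (contDiff_regDenom.comp (contDiff_fst.mul contDiff_snd))).inv
      fun p => (mul_pos (by positivity) (regDenom_pos _)).ne'

lemma ibpWeight_mul_eq {t x ξ : ℝ} (hx : x ≠ 0) (h : |t / x * ξ| ≤ 1 / 2) :
    ibpWeight (t / x, ξ) * ((2 * π * (x - t * ξ) : ℝ) : ℂ) = x := by
  have hpos : 0 < 1 - t / x * ξ := by linarith [(abs_le.mp h).2]
  rw [ibpWeight, ← Complex.ofReal_mul, regDenom_of_abs_le h]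
  have hne : x - t * ξ ≠ 0 := by
    rw [show x - t * ξ = x * (1 - t / x * ξ) by field_simp]
    exact mul_ne_zero hx hpos.ne'
  congr 1
  field_simp

section DerivSnd

variable {E : Type*} [NormedAddCommGroup E] [NormedSpace ℝ E]

def derivSnd (f : ℝ × ℝ → E) (p : ℝ × ℝ) : E := fderiv ℝ f p (0, 1)

lemma contDiff_derivSnd {f : ℝ × ℝ → E} (hf : ContDiff ℝ ∞ f) : ContDiff ℝ ∞ (derivSnd f) :=
  (ContinuousLinearMap.apply ℝ E ((0 : ℝ), (1 : ℝ))).contDiff.comp (hf.fderiv_right le_rfl)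

lemma hasDerivAt_derivSnd {f : ℝ × ℝ → E} (hf : Differentiable ℝ f) (s ξ : ℝ) :
    HasDerivAt (fun y => f (s, y)) (derivSnd f (s, ξ)) ξ :=
  (hf (s, ξ)).hasFDerivAt.comp_hasDerivAt ξ ((hasDerivAt_const ξ s).prodMk (hasDerivAt_id ξ))

lemma tsupport_derivSnd_subset (f : ℝ × ℝ → E) : tsupport (derivSnd f) ⊆ tsupport f :=
  closure_minimal (fun p hp => support_fderiv_subset ℝ fun h => hp (by simp [derivSnd, h]))
    (isClosed_tsupport f)

end DerivSnd

section Amplitude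

variable (a : ℝ → ℂ)

def ibpAmplitude : ℕ → ℝ × ℝ → ℂ
  | 0 => fun p => a p.2
  | k + 1 => derivSnd fun p => ibpAmplitude k p * ibpWeight p

variable {a}

lemma contDiff_ibpAmplitude (ha : ContDiff ℝ ∞ a) : ∀ k, ContDiff ℝ ∞ (ibpAmplitude a k)
  | 0 => ha.comp contDiff_snd
  | k + 1 => contDiff_derivSnd ((contDiff_ibpAmplitude ha k).mul contDiff_ibpWeight)

lemma tsupport_ibpAmplitude_subset :
    ∀ k, tsupport (ibpAmplitude a k) ⊆ Prod.snd ⁻¹' tsupport a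
  | 0 => tsupport_comp_subset_preimage a continuous_snd
  | k + 1 => (tsupport_derivSnd_subset _).trans <|
      tsupport_mul_subset_left.trans (tsupport_ibpAmplitude_subset k)

lemma ibpAmplitude_eq_zero {k : ℕ} {s ξ : ℝ} (hξ : ξ ∉ tsupport a) :
    ibpAmplitude a k (s, ξ) = 0 :=
  image_eq_zero_of_notMem_tsupport fun h => hξ (tsupport_ibpAmplitude_subset k h)

lemma hasCompactSupport_ibpAmplitude_slice (hc : HasCompactSupport a) (k : ℕ) (s : ℝ) :
    HasCompactSupport fun ξ => ibpAmplitude a k (s, ξ) :=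
  hc.mono' fun ξ hξ => by
    by_contra h
    exact hξ (ibpAmplitude_eq_zero h)

lemma exists_norm_ibpAmplitude_le (ha : ContDiff ℝ ∞ a) (hc : HasCompactSupport a) (k : ℕ)
    {K : Set ℝ} (hK : IsCompact K) : ∃ M, ∀ s ∈ K, ∀ ξ, ‖ibpAmplitude a k (s, ξ)‖ ≤ M := by
  obtain ⟨M, hM⟩ := (hK.prod hc).exists_bound_of_continuousOn
    (contDiff_ibpAmplitude ha k).continuous.continuousOn
  refine ⟨max M 0, fun s hs ξ => ?_⟩
  by_cases hξ : ξ ∈ tsupport a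
  · exact (hM (s, ξ) ⟨hs, hξ⟩).trans (le_max_left _ _)
  · simp [ibpAmplitude_eq_zero hξ]

end Amplitude

section Phase

variable (t x : ℝ)

def schrodingerPhase (ξ : ℝ) : ℂ :=
  Complex.exp (Complex.I * ((-(π * t * ξ ^ 2) + 2 * π * x * ξ : ℝ) : ℂ))

lemma norm_schrodingerPhase (ξ : ℝ) : ‖schrodingerPhase t x ξ‖ = 1 :=
  Complex.norm_exp_I_mul_ofReal _

lemma continuous_schrodingerPhase : Continuous (schrodingerPhase t x) := by
  unfold schrodingerPhase
  fun_prop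

lemma hasDerivAt_schrodingerPhase (ξ : ℝ) :
    HasDerivAt (schrodingerPhase t x)
      (schrodingerPhase t x ξ * (Complex.I * ((2 * π * (x - t * ξ) : ℝ) : ℂ))) ξ := by
  have hψ : HasDerivAt (fun ξ : ℝ => -(π * t * ξ ^ 2) + 2 * π * x * ξ)
      (2 * π * (x - t * ξ)) ξ := by
    have h := ((hasDerivAt_pow 2 ξ).const_mul (π * t)).neg.add
      ((hasDerivAt_id ξ).const_mul (2 * π * x))
    simp only [id_eq] at h
    exact h.congr_deriv (by push_cast; ring)
  exact (hψ.ofReal_comp.const_mul Complex.I).cexp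

end Phase

section Decay

variable {a : ℝ → ℂ}

lemma abs_div_le_half {t x : ℝ} (hx : x ≠ 0) (htx : 2 * |t| ≤ |x|) : |t / x| ≤ 1 / 2 := by
  rw [abs_div, div_le_iff₀ (abs_pos.mpr hx)]
  linarith

lemma integral_ibpAmplitude_mul_schrodingerPhase_eq (ha : ContDiff ℝ ∞ a)
    (hsupp : tsupport a ⊆ Icc (-1) 1) {t x : ℝ} (hx : x ≠ 0) (htx : 2 * |t| ≤ |x|) (k : ℕ) :
    ∫ ξ, ibpAmplitude a k (t / x, ξ) * schrodingerPhase t x ξ =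
      Complex.I * (x : ℂ)⁻¹ * ∫ ξ, ibpAmplitude a (k + 1) (t / x, ξ) * schrodingerPhase t x ξ := by
  have hc : HasCompactSupport a := isCompact_Icc.of_isClosed_subset (isClosed_tsupport a) hsupp
  have hs := abs_div_le_half hx htx
  set s := t / x
  set u := fun ξ => ibpAmplitude a k (s, ξ) * ibpWeight (s, ξ)
  have hu : ∀ ξ, HasDerivAt u (ibpAmplitude a (k + 1) (s, ξ)) ξ :=
    hasDerivAt_derivSnd
      (((contDiff_ibpAmplitude ha k).mul contDiff_ibpWeight).differentiable (by simp)) s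
  have hAk := (contDiff_ibpAmplitude ha k).continuous
  have hAk' := (contDiff_ibpAmplitude ha (k + 1)).continuous
  have hW := contDiff_ibpWeight.continuous
  have he := continuous_schrodingerPhase t x
  have hcu : HasCompactSupport u := (hasCompactSupport_ibpAmplitude_slice hc k s).mul_right
  have hcu' := hasCompactSupport_ibpAmplitude_slice hc (k + 1) s
  have hibp := integral_mul_deriv_eq_deriv_mul_of_integrable (fun ξ _ => hu ξ)
    (fun ξ _ => hasDerivAt_schrodingerPhase t x ξ)
    (Continuous.integrable_of_hasCompactSupport (by fun_prop) hcu.mul_right)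
    (Continuous.integrable_of_hasCompactSupport (by fun_prop) hcu'.mul_right)
    (Continuous.integrable_of_hasCompactSupport (by fun_prop) hcu.mul_right)
  have hpoint : ∀ ξ,
      u ξ * (schrodingerPhase t x ξ * (Complex.I * ((2 * π * (x - t * ξ) : ℝ) : ℂ))) =
      Complex.I * x * (ibpAmplitude a k (s, ξ) * schrodingerPhase t x ξ) := by
    intro ξ
    by_cases hξ : ξ ∈ tsupport a
    · have hsξ : |s * ξ| ≤ 1 / 2 := by
        rw [abs_mul]
        nlinarith [abs_le.mpr (hsupp hξ), abs_nonneg s, abs_nonneg ξ]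
      linear_combination (ibpAmplitude a k (s, ξ) * schrodingerPhase t x ξ * Complex.I) *
        ibpWeight_mul_eq hx hsξ
    · simp [u, ibpAmplitude_eq_zero hξ]
  have hx' : (x : ℂ) ≠ 0 := by exact_mod_cast hx
  simp only [hpoint, integral_const_mul] at hibp
  field_simp
  linear_combination (-Complex.I) * hibp +
    (x * ∫ ξ, ibpAmplitude a k (s, ξ) * schrodingerPhase t x ξ) * Complex.I_sq

lemma integral_mul_schrodingerPhase_eq_pow_mul (ha : ContDiff ℝ ∞ a)
    (hsupp : tsupport a ⊆ Icc (-1) 1) {t x : ℝ} (hx : x ≠ 0) (htx : 2 * |t| ≤ |x|) (n : ℕ) :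
    ∫ ξ, a ξ * schrodingerPhase t x ξ =
      (Complex.I * (x : ℂ)⁻¹) ^ n * ∫ ξ, ibpAmplitude a n (t / x, ξ) * schrodingerPhase t x ξ := by
  induction n with
  | zero => rw [pow_zero, one_mul]; rfl
  | succ n ih =>
    rw [ih, integral_ibpAmplitude_mul_schrodingerPhase_eq ha hsupp hx htx n]
    ring

lemma exists_norm_integral_mul_schrodingerPhase_le (ha : ContDiff ℝ ∞ a)
    (hsupp : tsupport a ⊆ Icc (-1) 1) (n : ℕ) : ∃ M, ∀ t x : ℝ, x ≠ 0 → 2 * |t| ≤ |x| →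
      ‖∫ ξ, a ξ * schrodingerPhase t x ξ‖ ≤ M * |x|⁻¹ ^ n := by
  have hc : HasCompactSupport a := isCompact_Icc.of_isClosed_subset (isClosed_tsupport a) hsupp
  obtain ⟨M, hM⟩ :=
    exists_norm_ibpAmplitude_le ha hc n (isCompact_Icc (a := -(1 / 2)) (b := 1 / 2))
  refine ⟨M * volume.real (Icc (-1 : ℝ) 1), fun t x hx htx => ?_⟩
  rw [integral_mul_schrodingerPhase_eq_pow_mul ha hsupp hx htx n, norm_mul, norm_pow, norm_mul,
    Complex.norm_I, one_mul, norm_inv, Complex.norm_real, Real.norm_eq_abs, mul_comm]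
  gcongr
  rw [← setIntegral_eq_integral_of_forall_compl_eq_zero fun ξ hξ => by
    simp [ibpAmplitude_eq_zero fun h => hξ (hsupp h)]]
  refine norm_setIntegral_le_of_norm_le_const measure_Icc_lt_top fun ξ _ => ?_
  rw [norm_mul, norm_schrodingerPhase, mul_one]
  exact hM _ (abs_le.mp (abs_div_le_half hx htx)) ξ

end Decay

lemma min_one_inv_pow_le_rpow_neg {y N : ℝ} {n : ℕ} (hy : 0 < y) (hN : 0 ≤ N) (hn : N ≤ n) :
    min 1 (y⁻¹ ^ n) ≤ y ^ (-N) := by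
  rcases le_or_gt 1 y with h1 | h1
  · calc min 1 (y⁻¹ ^ n) ≤ y⁻¹ ^ n := min_le_right _ _
      _ = y ^ (-(n : ℝ)) := by rw [Real.rpow_neg hy.le, Real.rpow_natCast, inv_pow]
      _ ≤ y ^ (-N) := Real.rpow_le_rpow_of_exponent_le h1 (neg_le_neg hn)
  · exact (min_le_left _ _).trans
      (Real.one_le_rpow_of_pos_of_le_one_of_nonpos hy h1.le (neg_nonpos.mpr hN))

end NonstationaryPhase

end

open NonstationaryPhase

/-- **Non-stationary phase decay for the free Schrödinger evolution.** If `φ : ℝ → ℂ` is a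
Schwartz function whose Fourier transform is supported in `(−1, 1)`, then for every `N ≥ 1`
there is a constant `C_N > 0` such that for all `t ≥ 0` and all `x` with `|x| > 2t`,
`|∫ φ̂(ξ) e^{−iπtξ² + 2πixξ} dξ| ≤ C_N |x|^{−N}`. -/
theorem nonstationary_phase_decay (φ : SchwartzMap ℝ ℂ)
    (hsupp : Function.support (𝓕 (⇑φ)) ⊆ Set.Ioo (-1 : ℝ) 1) :
    ∀ N : ℝ, 1 ≤ N → ∃ C : ℝ, 0 < C ∧
      ∀ t x : ℝ, 0 ≤ t → 2 * t < |x| →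
        ‖(∫ ξ : ℝ, 𝓕 (⇑φ) ξ *
            Complex.exp (Complex.I *
              ((-(Real.pi * t * ξ ^ 2) + 2 * Real.pi * x * ξ : ℝ) : ℂ)))‖
          ≤ C * |x| ^ (-N) := by
  intro N hN
  have hsmooth := (𝓕 φ).smooth ⊤
  have htsupp : tsupport (𝓕 (⇑φ)) ⊆ Set.Icc (-1) 1 :=
    closure_minimal (hsupp.trans Set.Ioo_subset_Icc_self) isClosed_Icc
  set n := ⌈N⌉₊
  obtain ⟨M₀, hM₀⟩ := exists_norm_integral_mul_schrodingerPhase_le hsmooth htsupp 0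
  obtain ⟨M, hM⟩ := exists_norm_integral_mul_schrodingerPhase_le hsmooth htsupp n
  set C := max 1 (max M₀ M)
  refine ⟨C, lt_max_of_lt_left one_pos, fun t x ht htx => ?_⟩
  have hx : 0 < |x| := by linarith
  have htx' : 2 * |t| ≤ |x| := by rw [abs_of_nonneg ht]; exact htx.le
  have h₀ := hM₀ t x (abs_pos.mp hx) htx'
  rw [pow_zero, mul_one] at h₀
  calc _ ≤ min M₀ (M * |x|⁻¹ ^ n) := le_min h₀ (hM t x (abs_pos.mp hx) htx')
    _ ≤ C * min 1 (|x|⁻¹ ^ n) := by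
        rw [mul_min_of_nonneg _ _ (by positivity), mul_one]
        exact min_le_min (by simp [C]) (by gcongr; simp [C])
    _ ≤ C * |x| ^ (-N) := by
        gcongr
        exact min_one_inv_pow_le_rpow_neg hx (by linarith) (Nat.le_ceil N)
end

section
/- Let n ≥ 2 and let Q ≥ 2^{n+2} be a real number. Then the set of points y = (y₂,…,y_n) ∈ [0,1]^{n−1} for which there exist an integer q' with 1 ≤ q' ≤ Q/2^{n+2} and integers p'₂,…,p'_n such that |y_j − p'_j/q'| ≤ 1/(q'(Q/4)^{1/(n−1)}) for every 2 ≤ j ≤ n, has (n−1)-dimensional Lebesgue measure at most 1/2. -/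
open MeasureTheory Set ENNReal

set_option maxHeartbeats 1000000 in
/-- **Measure of the set of well-approximable points with small denominator.** For `n ≥ 2`
and a real `Q ≥ 2^{n+2}`, the set of points `y` in the unit cube `[0,1]^{n−1}` admitting a
simultaneous rational approximation `|y_j − p'_j/q'| ≤ 1/(q'(Q/4)^{1/(n−1)})` with some
denominator `1 ≤ q' ≤ Q/2^{n+2}` has Lebesgue measure at most `1/2`. -/
theorem small_denominator_approximable_measure (n : ℕ) (hn : 2 ≤ n) (Q : ℝ)
    (hQ : 2 ^ (n + 2) ≤ Q) :
    MeasureTheory.volume {y : Fin (n - 1) → ℝ |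
        (∀ j, y j ∈ Set.Icc (0 : ℝ) 1) ∧
        ∃ q' : ℤ, 1 ≤ q' ∧ (q' : ℝ) ≤ Q / 2 ^ (n + 2) ∧
          ∃ p' : Fin (n - 1) → ℤ,
            ∀ j, |y j - (p' j : ℝ) / (q' : ℝ)| ≤
              1 / ((q' : ℝ) * (Q / 4) ^ ((1 : ℝ) / ((n : ℝ) - 1)))}
      ≤ 1 / 2 := by
  have hQpos : (0:ℝ) < Q := lt_of_lt_of_le (by positivity) hQ
  set m : ℕ := n - 1 with hm_def
  have hm1 : 1 ≤ m := by omega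
  have hmn : (n : ℝ) - 1 = (m : ℝ) := by
    have : (m : ℝ) + 1 = (n : ℝ) := by
      rw [hm_def]; push_cast [Nat.cast_sub (by omega : 1 ≤ n)]; ring
    linarith
  have hmpos : (0:ℝ) < (m : ℝ) := by exact_mod_cast hm1
  set R : ℝ := (Q / 4) ^ ((1 : ℝ) / ((n : ℝ) - 1)) with hR_def
  have hQ4 : (2:ℝ) ^ m ≤ Q / 4 := by
    have : (2:ℝ) ^ (n+2) = 4 * 2 ^ n := by ring
    have h2 : (2:ℝ) ^ m ≤ 2 ^ n := pow_le_pow_right₀ (by norm_num) (by omega)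
    nlinarith [pow_pos (show (0:ℝ) < 2 by norm_num) n]
  have hQ4pos : (0:ℝ) < Q / 4 := lt_of_lt_of_le (by positivity) hQ4
  have hRpos : 0 < R := Real.rpow_pos_of_pos hQ4pos _
  have hRm : R ^ m = Q / 4 := by
    rw [hR_def, ← Real.rpow_natCast ((Q / 4) ^ ((1 : ℝ) / ((n : ℝ) - 1))) m,
      ← Real.rpow_mul hQ4pos.le]
    rw [hmn, one_div, inv_mul_cancel₀ (ne_of_gt hmpos), Real.rpow_one]
  have hR2 : (2:ℝ) ≤ R := by
    have h1 : ((2:ℝ) ^ m) ^ ((1 : ℝ) / ((n : ℝ) - 1)) ≤ R := by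
      apply Real.rpow_le_rpow (by positivity) hQ4
      rw [hmn]; positivity
    have h2 : ((2:ℝ) ^ m) ^ ((1 : ℝ) / ((n : ℝ) - 1)) = 2 := by
      rw [← Real.rpow_natCast (2:ℝ) m, ← Real.rpow_mul (by norm_num), hmn,
        mul_one_div, div_self (ne_of_gt hmpos), Real.rpow_one]
    linarith
  -- the floor of Q / 2^(n+2)
  set M : ℤ := ⌊Q / 2 ^ (n + 2)⌋ with hM_def
  have hM1 : 1 ≤ M := by
    rw [hM_def]
    apply Int.le_floor.2
    rw [le_div_iff₀ (by positivity)]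
    push_cast; linarith
  -- per-coordinate covering set
  set A : ℤ → Set ℝ := fun q =>
    ⋃ k ∈ Finset.Icc (0:ℤ) q,
      (Set.Icc (0:ℝ) 1 ∩ Set.Icc ((k:ℝ)/q - 1/(q*R)) ((k:ℝ)/q + 1/(q*R))) with hA_def
  -- inclusion
  have hsub : {y : Fin (n - 1) → ℝ |
        (∀ j, y j ∈ Set.Icc (0 : ℝ) 1) ∧
        ∃ q' : ℤ, 1 ≤ q' ∧ (q' : ℝ) ≤ Q / 2 ^ (n + 2) ∧
          ∃ p' : Fin (n - 1) → ℤ,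
            ∀ j, |y j - (p' j : ℝ) / (q' : ℝ)| ≤
              1 / ((q' : ℝ) * R)}
      ⊆ ⋃ q ∈ Finset.Icc (1:ℤ) M, Set.univ.pi (fun _ : Fin (n-1) => A q) := by
    rintro y ⟨hy01, q, hq1, hqM, p, hp⟩
    have hq0 : (0:ℝ) < (q:ℝ) := by exact_mod_cast hq1
    have hδpos : (0:ℝ) < 1/(q*R) := by positivity
    have hδq : (q:ℝ) * (1/(q*R)) = 1/R := by field_simp
    have hδsmall : (q:ℝ) * (1/(q*R)) ≤ 1/2 := by
      rw [hδq, div_le_div_iff₀ hRpos (by norm_num)]; linarith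
    refine Set.mem_iUnion₂.2 ⟨q, ?_, ?_⟩
    · exact Finset.mem_Icc.2 ⟨hq1, Int.le_floor.2 hqM⟩
    · intro j _
      have hyj := hy01 j
      have hpj := hp j
      rw [abs_sub_le_iff] at hpj
      -- bounds on p j
      have hple : (p j : ℝ) ≤ (q:ℝ) + 1/2 := by
        have h1 : (p j : ℝ) / q ≤ y j + 1/(q*R) := by linarith [hpj.2]
        have h2 : (p j : ℝ) ≤ (y j + 1/(q*R)) * q := by
          rwa [div_le_iff₀ hq0] at h1
        have h3 : (y j + 1/(q*R)) * q ≤ q + 1/2 := by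
          have := hyj.2; nlinarith
        linarith
      have hpge : (-(1/2) : ℝ) ≤ (p j : ℝ) := by
        have h1 : y j - 1/(q*R) ≤ (p j : ℝ) / q := by linarith [hpj.1]
        have h2 : (y j - 1/(q*R)) * q ≤ (p j : ℝ) := by
          rwa [le_div_iff₀ hq0] at h1
        have h3 : -(1/2:ℝ) ≤ (y j - 1/(q*R)) * q := by
          have := hyj.1; nlinarith
        linarith
      have hp0 : 0 ≤ p j := by
        by_contra h
        have : (p j : ℝ) ≤ -1 := by exact_mod_cast (by omega : p j ≤ -1)
        linarith
      have hpq : p j ≤ q := by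
        by_contra h
        have : ((q:ℝ) + 1) ≤ (p j : ℝ) := by exact_mod_cast (by omega : q + 1 ≤ p j)
        linarith
      rw [hA_def]
      refine Set.mem_biUnion (Finset.mem_Icc.2 ⟨hp0, hpq⟩) ?_
      refine ⟨hyj, ?_⟩
      rw [Set.mem_Icc]
      constructor <;> linarith [hpj.1, hpj.2]
  refine le_trans (measure_mono hsub) ?_
  refine le_trans (measure_biUnion_finset_le _ _) ?_
  -- bound each term
  have hbound : ∀ q ∈ Finset.Icc (1:ℤ) M,
      volume (Set.univ.pi (fun _ : Fin (n-1) => A q)) ≤ ENNReal.ofReal (2^(n+1)/Q) := by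
    intro q hq
    rw [Finset.mem_Icc] at hq
    have hq1 : 1 ≤ q := hq.1
    have hq0 : (0:ℝ) < (q:ℝ) := by exact_mod_cast hq1
    set δ : ℝ := 1/(q*R) with hδ_def
    have hδpos : (0:ℝ) < δ := by positivity
    -- volume of A q
    have hvolA : volume (A q) ≤ ENNReal.ofReal (2/R) := by
      rw [hA_def]
      refine le_trans (measure_biUnion_finset_le _ _) ?_
      have hterm : ∀ k ∈ Finset.Icc (0:ℤ) q,
          volume (Set.Icc (0:ℝ) 1 ∩ Set.Icc ((k:ℝ)/q - δ) ((k:ℝ)/q + δ))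
            ≤ ENNReal.ofReal
              (2*δ - (if k = 0 then δ else 0) - (if k = q then δ else 0)) := by
        intro k hk
        rw [Finset.mem_Icc] at hk
        by_cases h0 : k = 0
        · subst h0
          rw [if_pos rfl, if_neg (by omega : ¬(0:ℤ) = q)]
          refine le_trans (measure_mono (?_ : _ ⊆ Set.Icc (0:ℝ) δ)) ?_
          · rintro x ⟨hx1, hx2⟩
            refine ⟨hx1.1, ?_⟩
            have h := hx2.2
            norm_num at h
            linarith
          · rw [Real.volume_Icc]
            apply ENNReal.ofReal_le_ofReal
            linarith
        · by_cases hqk : k = q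
          · subst hqk
            rw [if_neg h0, if_pos rfl]
            refine le_trans (measure_mono (?_ : _ ⊆ Set.Icc (1-δ) (1:ℝ))) ?_
            · rintro x ⟨hx1, hx2⟩
              refine ⟨?_, hx1.2⟩
              have h := hx2.1
              have hkk : (k:ℝ)/k = 1 := div_self (ne_of_gt hq0)
              rw [hkk] at h
              linarith
            · rw [Real.volume_Icc]
              apply ENNReal.ofReal_le_ofReal
              linarith
          · rw [if_neg h0, if_neg hqk, sub_zero, sub_zero]
            refine le_trans (measure_mono Set.inter_subset_right) ?_
            rw [Real.volume_Icc]
            apply ENNReal.ofReal_le_ofReal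
            linarith
      refine le_trans (Finset.sum_le_sum hterm) ?_
      rw [← ENNReal.ofReal_sum_of_nonneg]
      · apply ENNReal.ofReal_le_ofReal
        have hsum : ∑ k ∈ Finset.Icc (0:ℤ) q,
            (2*δ - (if k = 0 then δ else 0) - (if k = q then δ else 0))
            = ((Finset.Icc (0:ℤ) q).card : ℝ) * (2*δ) - δ - δ := by
          rw [Finset.sum_sub_distrib, Finset.sum_sub_distrib, Finset.sum_const,
            Finset.sum_ite_eq' (Finset.Icc (0:ℤ) q) 0 (fun _ => δ),
            Finset.sum_ite_eq' (Finset.Icc (0:ℤ) q) q (fun _ => δ),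
            if_pos (Finset.mem_Icc.2 ⟨le_refl _, by omega⟩),
            if_pos (Finset.mem_Icc.2 ⟨by omega, le_refl _⟩)]
          push_cast; ring
        rw [hsum, Int.card_Icc]
        have hcard : ((q + 1 - 0).toNat : ℝ) = (q:ℝ) + 1 := by
          rw [show (q+1-0 : ℤ) = q+1 by ring]
          have h := Int.toNat_of_nonneg (show (0:ℤ) ≤ q + 1 by omega)
          exact_mod_cast congrArg (fun z : ℤ => (z:ℝ)) h
        rw [hcard]
        have hδq : (q:ℝ) * δ = 1/R := by rw [hδ_def]; field_simp
        have heq : ((q:ℝ)+1) * (2*δ) - δ - δ = 2 * ((q:ℝ)*δ) := by ring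
        rw [heq, hδq]
        apply le_of_eq; ring
      · intro k hk
        split_ifs <;> linarith
    -- volume of the product
    rw [volume_pi_pi]
    rw [Finset.prod_const, Finset.card_univ, Fintype.card_fin]
    have hpow : volume (A q) ^ m ≤ ENNReal.ofReal ((2/R) ^ m) := by
      rw [ENNReal.ofReal_pow (div_nonneg (by norm_num) hRpos.le)]
      exact pow_le_pow_left' hvolA m
    refine le_trans hpow ?_
    apply ENNReal.ofReal_le_ofReal
    rw [div_pow, hRm]
    apply le_of_eq
    have h24 : (2:ℝ)^m * 4 = 2^(n+1) := by
      rw [show (4:ℝ) = 2^2 by norm_num, ← pow_add]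
      congr 1; omega
    rw [div_eq_div_iff (show (Q:ℝ)/4 ≠ 0 from ne_of_gt hQ4pos) (ne_of_gt hQpos),
      ← h24]
    ring
  refine le_trans (Finset.sum_le_sum hbound) ?_
  rw [Finset.sum_const, Int.card_Icc]
  have hMreal : ((M + 1 - 1).toNat : ℝ) = (M:ℝ) := by
    rw [show (M+1-1 : ℤ) = M by ring]
    have h := Int.toNat_of_nonneg (show (0:ℤ) ≤ M by omega)
    exact_mod_cast congrArg (fun z : ℤ => (z:ℝ)) h
  rw [nsmul_eq_mul]
  have hcast : ((M + 1 - 1).toNat : ℝ≥0∞) * ENNReal.ofReal (2^(n+1)/Q)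
      = ENNReal.ofReal (((M + 1 - 1).toNat : ℝ) * (2^(n+1)/Q)) := by
    rw [ENNReal.ofReal_mul (by positivity), ENNReal.ofReal_natCast]
  rw [hcast, hMreal]
  have hfinal : (M:ℝ) * (2^(n+1)/Q) ≤ 1/2 := by
    have hMle : (M:ℝ) ≤ Q / 2^(n+2) := Int.floor_le _
    have h1 : (M:ℝ) * (2^(n+1)/Q) ≤ (Q / 2^(n+2)) * (2^(n+1)/Q) := by
      apply mul_le_mul_of_nonneg_right hMle (by positivity)
    have h2 : (Q / 2^(n+2)) * ((2:ℝ)^(n+1)/Q) = 1/2 := by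
      have hp : (2:ℝ)^(n+2) = 2^(n+1)*2 := by rw [pow_succ]
      rw [hp]
      field_simp
    linarith
  calc ENNReal.ofReal ((M:ℝ) * (2^(n+1)/Q)) ≤ ENNReal.ofReal (1/2) :=
        ENNReal.ofReal_le_ofReal hfinal
    _ = 1/2 := by
        rw [ENNReal.ofReal_div_of_pos (by norm_num)]
        norm_num
end
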